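/- arXiv:1810.12272 — 12 statements merged into one kernel-verified Lean document; each statement's English description precedes it below -/
import Mathlib

section
/- The limit as m → ∞ of 2^(2m) / (C(2m,m)·√m) equals √π. -/
/-! Writing `n! = sₙ √(2n) (n/e)ⁿ` with `sₙ` the Stirling sequence, the quotient equals
`sₘ² / s₂ₘ` exactly, and `sₙ → √π`, so it tends to `π / √π = √π`. -/

open Real Filter Topology

theorem Stirling.stirlingSeq_sq_div_stirlingSeq_two_mul (m : ℕ) :
    stirlingSeq m ^ 2 / stirlingSeq (2 * m) = 2 ^ (2 * m) / ((2 * m).choose m * √m) := by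
  rcases eq_or_ne m 0 with rfl | hm
  · simp -- both sides divide by `0`: `s₀ = 0` and `√0 = 0`
  have hsqrt : √(2 * (2 * m : ℕ) : ℝ) = 2 * √m := by
    rw [Nat.cast_mul, ← mul_assoc, show (2 : ℝ) * (2 : ℕ) = 2 ^ 2 by norm_num,
      sqrt_mul (by positivity), sqrt_sq zero_le_two]
  rw [Nat.cast_choose ℝ (by omega : m ≤ 2 * m), show 2 * m - m = m by omega,
    stirlingSeq, stirlingSeq, hsqrt]
  field_simp
  rw [sq_sqrt (by positivity), sq_sqrt (by positivity), Nat.cast_mul, mul_div_assoc, mul_pow,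
    ← pow_mul]
  ring

theorem central_binom_limit :
    Filter.Tendsto
      (fun m : ℕ => (2 : ℝ) ^ (2 * m) / (((2 * m).choose m : ℝ) * Real.sqrt m))
      Filter.atTop (nhds (Real.sqrt Real.pi)) := by
  have hs := Stirling.tendsto_stirlingSeq_sqrt_pi
  have hs_even : Tendsto (fun m : ℕ => Stirling.stirlingSeq (2 * m)) atTop (𝓝 √π) :=
    hs.comp (tendsto_id.const_mul_atTop' two_pos)
  have hlim := (hs.pow 2).div hs_even (by positivity)
  rw [pow_two, mul_self_div_self] at hlim
  exact hlim.congr Stirling.stirlingSeq_sq_div_stirlingSeq_two_mul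
end

section
/- For positive integers n and k with 1 ≤ k ≤ ⌊n/2⌋, letting m = ⌊n/2⌋, the partial sum of binomial coefficients Σ_{i=0}^{k-1} C(n,i) is strictly less than C(n,k) · 2^(2m-1) / C(2m,m). -/
/-!
Going down from `k` in row `n`, the consecutive ratios `C(n, j - 1) / C(n, j) = j / (n - j + 1)`
are termwise at most the ratios `C(2m, l - 1) / C(2m, l)` met going down from the middle of
row `2m ≤ n`. Hence `C(n, i) / C(n, k) ≤ C(2m, m - k + i) / C(2m, m)` for `i ≤ k`, and the
left side is at most `C(n, k) / C(2m, m)` times the lower half `∑_{t < m} C(2m, t)` of row `2m`,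
which by symmetry equals `(4^m - C(2m, m)) / 2 < 2^(2m-1)`.
-/

open Finset

namespace Nat

theorem choose_mul_choose_succ_le {n N k m : ℕ} (hkm : k ≤ m) (h : N + k ≤ n + m) :
    n.choose k * N.choose (m + 1) ≤ n.choose (k + 1) * N.choose m := by
  refine Nat.le_of_mul_le_mul_right (c := (k + 1) * (m + 1)) ?_ (by positivity)
  calc n.choose k * N.choose (m + 1) * ((k + 1) * (m + 1))
      = n.choose k * (N.choose (m + 1) * (m + 1)) * (k + 1) := by ring
    _ = n.choose k * N.choose m * ((k + 1) * (N - m)) := by rw [choose_succ_right_eq]; ring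
    _ ≤ n.choose k * N.choose m * ((m + 1) * (n - k)) :=
        Nat.mul_le_mul_left _ (Nat.mul_le_mul (by omega) (by omega))
    _ = n.choose (k + 1) * (k + 1) * N.choose m * (m + 1) := by rw [choose_succ_right_eq]; ring
    _ = n.choose (k + 1) * N.choose m * ((k + 1) * (m + 1)) := by ring

theorem choose_mul_choose_add_le {n N d i k : ℕ} (hN : N ≤ n + d) (hk : d + k ≤ N)
    (hi : i ≤ k) : n.choose i * N.choose (d + k) ≤ n.choose k * N.choose (d + i) := by
  induction k, hi using Nat.le_induction with
  | base => exact le_rfl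
  | succ k hik ih =>
    have hstep : n.choose k * N.choose (d + k + 1) ≤ n.choose (k + 1) * N.choose (d + k) :=
      choose_mul_choose_succ_le (by omega) (by omega)
    refine Nat.le_of_mul_le_mul_right (c := N.choose (d + k)) ?_ (choose_pos (by omega))
    calc n.choose i * N.choose (d + k + 1) * N.choose (d + k)
        = n.choose i * N.choose (d + k) * N.choose (d + k + 1) := Nat.mul_right_comm ..
      _ ≤ n.choose k * N.choose (d + i) * N.choose (d + k + 1) :=
          Nat.mul_le_mul_right _ (ih (by omega))
      _ = n.choose k * N.choose (d + k + 1) * N.choose (d + i) := by ring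
      _ ≤ n.choose (k + 1) * N.choose (d + k) * N.choose (d + i) := Nat.mul_le_mul_right _ hstep
      _ = n.choose (k + 1) * N.choose (d + i) * N.choose (d + k) := by ring

theorem sum_range_choose_mul_le {n N d k : ℕ} (hN : N ≤ n + d) (hk : d + k ≤ N) :
    (∑ i ∈ range k, n.choose i) * N.choose (d + k) ≤
      n.choose k * ∑ t ∈ range (d + k), N.choose t := by
  calc (∑ i ∈ range k, n.choose i) * N.choose (d + k)
      ≤ ∑ i ∈ range k, n.choose k * N.choose (d + i) := by
        rw [sum_mul]
        exact sum_le_sum fun i hi ↦ choose_mul_choose_add_le hN hk (mem_range.1 hi).le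
    _ = n.choose k * ∑ i ∈ range k, N.choose (d + i) := (mul_sum ..).symm
    _ ≤ n.choose k * ∑ t ∈ range (d + k), N.choose t := by
        rw [sum_range_add]
        exact Nat.mul_le_mul_left _ (Nat.le_add_left _ _)

theorem two_mul_sum_range_choose_add_centralBinom (m : ℕ) :
    2 * ∑ i ∈ range m, (2 * m).choose i + (2 * m).choose m = 4 ^ m := by
  have hupper :
      ∑ j ∈ range m, (2 * m).choose (m + (j + 1)) = ∑ i ∈ range m, (2 * m).choose i := by
    rw [← sum_range_reflect (fun i ↦ (2 * m).choose i) m]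
    refine sum_congr rfl fun j hj ↦ ?_
    have hjm := mem_range.1 hj
    rw [← choose_symm (by omega), show 2 * m - (m + (j + 1)) = m - 1 - j by omega]
  calc 2 * ∑ i ∈ range m, (2 * m).choose i + (2 * m).choose m
      = ∑ i ∈ range m, (2 * m).choose i + ∑ j ∈ range (m + 1), (2 * m).choose (m + j) := by
        rw [sum_range_succ', hupper, add_zero]; ring
    _ = ∑ i ∈ range (2 * m + 1), (2 * m).choose i := by
        rw [← sum_range_add]; congr 2; ring
    _ = 4 ^ m := by rw [sum_range_choose, pow_mul]; rfl

theorem sum_range_choose_lt_two_pow {m : ℕ} (hm : m ≠ 0) :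
    ∑ i ∈ range m, (2 * m).choose i < 2 ^ (2 * m - 1) := by
  have hsum := two_mul_sum_range_choose_add_centralBinom m
  have hmid : 0 < (2 * m).choose m := choose_pos (by omega)
  have hpow : 4 ^ m = 2 * 2 ^ (2 * m - 1) :=
    calc 4 ^ m = 2 ^ (2 * m - 1 + 1) := by rw [Nat.sub_add_cancel (by omega), pow_mul]; rfl
      _ = 2 * 2 ^ (2 * m - 1) := pow_succ' ..
  omega

end Nat

theorem partial_sum_choose_lt (n k : ℕ) (hk1 : 1 ≤ k) (hk2 : k ≤ n / 2) :
    (∑ i ∈ Finset.range k, (n.choose i : ℝ)) <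
      (n.choose k : ℝ) * 2 ^ (2 * (n / 2) - 1) / ((2 * (n / 2)).choose (n / 2) : ℝ) := by
  set m := n / 2
  have hm : m - k + k = m := by omega
  have hnat : (∑ i ∈ range k, n.choose i) * (2 * m).choose m < n.choose k * 2 ^ (2 * m - 1) :=
    calc (∑ i ∈ range k, n.choose i) * (2 * m).choose m
        ≤ n.choose k * ∑ t ∈ range m, (2 * m).choose t := by
          simpa only [hm] using
            Nat.sum_range_choose_mul_le (n := n) (N := 2 * m) (d := m - k) (k := k)
              (by omega) (by omega)
      _ < n.choose k * 2 ^ (2 * m - 1) :=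
          Nat.mul_lt_mul_of_pos_left (Nat.sum_range_choose_lt_two_pow (by omega))
            (Nat.choose_pos (by omega))
  rw [lt_div_iff₀ (by exact_mod_cast Nat.choose_pos (by omega))]
  exact_mod_cast hnat
end

section
/- For positive integers n and k with 1 ≤ k ≤ ⌊n/2⌋, the quantity 2^(-n) · Σ_{i=0}^{k-1} C(n,i) is strictly less than C(n,k) · √(n / 2^(2n+1)). -/
/-!
Write `S(a) = ∑_{i<a} C(n,i)`. Since the binomial coefficients are log-concave, the ratio
`S(a) / C(n,a)` is nondecreasing for `a ≤ n`, so it suffices to treat `k = ⌊n/2⌋`. There,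
symmetry gives `2 S(⌊n/2⌋) + C(n,⌊n/2⌋) ≤ 2^n`, and the central binomial estimate
`4^m ≤ √(4m) C(2m,m)` gives `2^n ≤ √(2n+2) C(n,⌊n/2⌋)`; as `√(2n+2) < 1 + √(2n)`, this yields
`S(⌊n/2⌋) < √(n/2) C(n,⌊n/2⌋)`.
-/

open Finset

namespace Nat

theorem sixteen_pow_le_four_mul_mul_centralBinom_sq {m : ℕ} (hm : 0 < m) :
    16 ^ m ≤ 4 * m * centralBinom m ^ 2 := by
  induction m, hm using Nat.le_induction with
  | base => decide
  | succ m _ ih =>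
    refine Nat.le_of_mul_le_mul_left (c := m + 1) ?_ (succ_pos m)
    calc (m + 1) * 16 ^ (m + 1) = 16 * (m + 1) * 16 ^ m := by ring
      _ ≤ 16 * (m + 1) * (4 * m * centralBinom m ^ 2) := by gcongr
      _ = 64 * (m * (m + 1)) * centralBinom m ^ 2 := by ring
      _ ≤ 16 * (2 * m + 1) ^ 2 * centralBinom m ^ 2 := by gcongr ?_ * _; nlinarith
      _ = 4 * (2 * (2 * m + 1) * centralBinom m) ^ 2 := by ring
      _ = (m + 1) * (4 * (m + 1) * centralBinom (m + 1) ^ 2) := by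
        rw [← succ_mul_centralBinom_succ]; ring

theorem four_pow_le_two_mul_add_two_mul_choose_half_sq (n : ℕ) :
    4 ^ n ≤ (2 * n + 2) * n.choose (n / 2) ^ 2 := by
  obtain ⟨m, rfl | rfl⟩ := n.even_or_odd'
  · rcases m.eq_zero_or_pos with rfl | hm
    · simp
    rw [Nat.mul_div_cancel_left m two_pos, ← centralBinom_eq_two_mul_choose, pow_mul]
    calc (4 ^ 2) ^ m ≤ 4 * m * centralBinom m ^ 2 := sixteen_pow_le_four_mul_mul_centralBinom_sq hm
      _ ≤ (2 * (2 * m) + 2) * centralBinom m ^ 2 := by gcongr; omega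
  · have hcentral : centralBinom (m + 1) = 2 * (2 * m + 1).choose m := by
      rw [centralBinom_eq_two_mul_choose, mul_add_one, choose_succ_succ, choose_symm_half]
      ring
    have h := sixteen_pow_le_four_mul_mul_centralBinom_sq m.succ_pos
    rw [hcentral, pow_succ] at h
    rw [show (2 * m + 1) / 2 = m by omega, pow_succ, pow_mul]
    norm_num at h ⊢
    linarith

theorem two_mul_sum_range_choose_add_choose_le {n m : ℕ} (h : 2 * m ≤ n) :
    2 * ∑ i ∈ range m, n.choose i + n.choose m ≤ 2 ^ n := by
  have hreflect : ∑ i ∈ range m, n.choose i = ∑ i ∈ Ico (n + 1 - m) (n + 1), n.choose i := by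
    have := sum_Ico_reflect n.choose 0 (by omega : m ≤ n + 1)
    rw [Nat.sub_zero, Nat.Ico_zero_eq_range] at this
    rw [← this]
    exact sum_congr rfl fun i hi => (choose_symm (by have := mem_range.1 hi; omega)).symm
  have hmiddle : n.choose m ≤ ∑ i ∈ Ico m (n + 1 - m), n.choose i :=
    single_le_sum (fun _ _ => Nat.zero_le _) (mem_Ico.2 ⟨le_rfl, by omega⟩)
  rw [← sum_range_choose, ← sum_range_add_sum_Ico _ (by omega : n + 1 - m ≤ n + 1),
    ← sum_range_add_sum_Ico _ (by omega : m ≤ n + 1 - m), ← hreflect]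
  omega

theorem choose_mul_choose_succ_le_s5 {n i a : ℕ} (hia : i ≤ a) (han : a < n) :
    n.choose i * n.choose (a + 1) ≤ n.choose (i + 1) * n.choose a := by
  refine Nat.le_of_mul_le_mul_right (c := (i + 1) * (a + 1)) ?_ (by positivity)
  calc n.choose i * n.choose (a + 1) * ((i + 1) * (a + 1))
      = n.choose i * (i + 1) * (n.choose (a + 1) * (a + 1)) := by ring
    _ = n.choose i * n.choose a * ((i + 1) * (n - a)) := by rw [choose_succ_right_eq]; ring
    _ ≤ n.choose i * n.choose a * ((n - i) * (a + 1)) := by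
      rw [mul_comm (n - i)]
      gcongr n.choose i * n.choose a * ?_
      exact Nat.mul_le_mul (by omega) (by omega)
    _ = n.choose (i + 1) * (i + 1) * n.choose a * (a + 1) := by rw [choose_succ_right_eq]; ring
    _ = n.choose (i + 1) * n.choose a * ((i + 1) * (a + 1)) := by ring

theorem sum_range_choose_mul_choose_succ_le {n a : ℕ} (han : a < n) :
    (∑ i ∈ range a, n.choose i) * n.choose (a + 1) ≤
      (∑ i ∈ range (a + 1), n.choose i) * n.choose a := by
  rw [sum_mul, sum_mul, sum_range_succ']
  calc ∑ i ∈ range a, n.choose i * n.choose (a + 1)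
      ≤ ∑ i ∈ range a, n.choose (i + 1) * n.choose a :=
        sum_le_sum fun i hi => choose_mul_choose_succ_le_s5 (mem_range.1 hi).le han
    _ ≤ _ := Nat.le_add_right _ _

end Nat

theorem monotoneOn_sum_range_choose_div_choose (n : ℕ) :
    MonotoneOn (fun a => (∑ i ∈ range a, (n.choose i : ℝ)) / n.choose a) (Set.Iic n) := by
  refine monotoneOn_of_le_succ Set.ordConnected_Iic fun a _ _ hsucc => ?_
  rw [Set.mem_Iic, Order.succ_eq_add_one] at hsucc
  have hpos : ∀ b ≤ n, (0 : ℝ) < n.choose b := fun b hb => by exact_mod_cast Nat.choose_pos hb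
  simp only [Order.succ_eq_add_one]
  rw [div_le_div_iff₀ (hpos a (by omega)) (hpos (a + 1) hsucc)]
  exact_mod_cast Nat.sum_range_choose_mul_choose_succ_le hsucc

theorem two_pow_le_sqrt_mul_choose_half (n : ℕ) :
    (2 : ℝ) ^ n ≤ √(2 * n + 2) * n.choose (n / 2) := by
  rw [← Real.sqrt_sq (by positivity : (0 : ℝ) ≤ n.choose (n / 2)), ← Real.sqrt_mul (by positivity)]
  refine Real.le_sqrt_of_sq_le ?_
  rw [← pow_mul, mul_comm, pow_mul]
  norm_num
  exact_mod_cast Nat.four_pow_le_two_mul_add_two_mul_choose_half_sq n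

theorem sum_range_choose_half_lt {n : ℕ} (hn : 0 < n) :
    ∑ i ∈ range (n / 2), (n.choose i : ℝ) < n.choose (n / 2) * √(n / 2) := by
  have hsum : 2 * ∑ i ∈ range (n / 2), (n.choose i : ℝ) + n.choose (n / 2) ≤ 2 ^ n := by
    exact_mod_cast Nat.two_mul_sum_range_choose_add_choose_le (Nat.mul_div_le n 2)
  have hcentral := two_pow_le_sqrt_mul_choose_half n
  have hchoose : (0 : ℝ) < n.choose (n / 2) := by exact_mod_cast Nat.choose_pos (Nat.div_le_self n 2)
  have hsq : √((n : ℝ) / 2) ^ 2 = n / 2 := Real.sq_sqrt (by positivity)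
  have hquarter : 1 / 4 < √((n : ℝ) / 2) := by
    rw [Real.lt_sqrt (by norm_num)]
    have : (1 : ℝ) ≤ n := by exact_mod_cast hn
    linarith
  have hsqrt : √(2 * n + 2) < 1 + 2 * √((n : ℝ) / 2) := by
    rw [Real.sqrt_lt' (by positivity)]
    nlinarith
  nlinarith

theorem hamming_ball_mass_lt (n k : ℕ) (hk1 : 1 ≤ k) (hk2 : k ≤ n / 2) :
    ((2 : ℝ) ^ n)⁻¹ * ∑ i ∈ Finset.range k, (n.choose i : ℝ) <
      (n.choose k : ℝ) * Real.sqrt ((n : ℝ) / 2 ^ (2 * n + 1)) := by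
  have hhalf : n / 2 ≤ n := Nat.div_le_self n 2
  have hchoose : (0 : ℝ) < n.choose k := by exact_mod_cast Nat.choose_pos (hk2.trans hhalf)
  have hball : ∑ i ∈ range k, (n.choose i : ℝ) < n.choose k * √(n / 2) := by
    rw [← div_lt_iff₀' hchoose]
    calc (∑ i ∈ range k, (n.choose i : ℝ)) / n.choose k
        ≤ (∑ i ∈ range (n / 2), (n.choose i : ℝ)) / n.choose (n / 2) :=
          monotoneOn_sum_range_choose_div_choose n (hk2.trans hhalf) hhalf hk2
      _ < √(n / 2) := by
          rw [div_lt_iff₀' (by exact_mod_cast Nat.choose_pos hhalf)]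
          exact sum_range_choose_half_lt (by omega)
  have hscale : √((n : ℝ) / 2 ^ (2 * n + 1)) = √(n / 2) / 2 ^ n := by
    rw [pow_succ, pow_mul', div_mul_eq_div_div_swap, Real.sqrt_div' _ (by positivity),
      Real.sqrt_sq (by positivity)]
  rw [hscale, inv_mul_eq_div, mul_div_assoc']
  exact div_lt_div_of_pos_right hball (by positivity)
end

section
/- Let 1 ≤ u ≤ w be integers. Then Σ_{ζ=1}^{u} C(u,ζ) · Σ_{ξ=ζ}^{w} C(w,ξ) · min(ζ,ξ) ≥ (u/8) · 2^(u+w). -/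
/-!
Keep only the outer terms with `ζ ≤ ⌈u/2⌉`. Since `u ≤ w`, these satisfy `ζ ≤ ⌈w/2⌉`, so the
inner sum is `ζ` times a binomial tail starting below the middle, which is at least `2^w / 2` by
the symmetry `C(w, ξ) = C(w, w - ξ)`. What remains is `∑_{ζ ≤ ⌈u/2⌉} ζ C(u, ζ) = u ∑_{j < ⌈u/2⌉} C(u-1, j)`,
a head sum reaching past the middle, hence at least `u 2^(u-1) / 2`.
-/

open Finset

namespace Nat

theorem sum_range_choose_eq_sum_Icc_choose {n c : ℕ} (hc : c ≤ n + 1) :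
    ∑ j ∈ range c, n.choose j = ∑ j ∈ Icc (n + 1 - c) n, n.choose j := by
  calc ∑ j ∈ range c, n.choose j = ∑ j ∈ Ico 0 c, n.choose (n - j) := by
        rw [Nat.Ico_zero_eq_range]
        refine sum_congr rfl fun j hj => (choose_symm ?_).symm
        have := mem_range.mp hj
        omega
    _ = ∑ j ∈ Icc (n + 1 - c) n, n.choose j := by
        rw [sum_Ico_reflect _ _ hc, Nat.sub_zero, ← Ico_add_one_right_eq_Icc]

theorem two_pow_le_two_mul_sum_Icc_choose {n c : ℕ} (hc : 2 * c ≤ n + 1) :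
    2 ^ n ≤ 2 * ∑ j ∈ Icc c n, n.choose j := by
  have hsplit : ∑ j ∈ range c, n.choose j + ∑ j ∈ Icc c n, n.choose j = 2 ^ n := by
    rw [← sum_range_choose, ← Ico_add_one_right_eq_Icc, sum_range_add_sum_Ico _ (by omega)]
  have hhead : ∑ j ∈ range c, n.choose j ≤ ∑ j ∈ Icc c n, n.choose j := by
    rw [sum_range_choose_eq_sum_Icc_choose (by omega)]
    exact sum_le_sum_of_subset (Icc_subset_Icc (by omega) le_rfl)
  omega

theorem two_pow_le_two_mul_sum_range_choose {n c : ℕ} (hc : n < 2 * c) (hcn : c ≤ n + 1) :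
    2 ^ n ≤ 2 * ∑ j ∈ range c, n.choose j := by
  rw [sum_range_choose_eq_sum_Icc_choose hcn]
  exact two_pow_le_two_mul_sum_Icc_choose (by omega)

theorem sum_Icc_choose_mul_self (n c : ℕ) :
    ∑ k ∈ Icc 1 c, (n + 1).choose k * k = (n + 1) * ∑ j ∈ range c, n.choose j := by
  rw [mul_sum, ← Ico_add_one_right_eq_Icc, ← Nat.Ico_zero_eq_range, ← sum_Ico_add' _ 0 c 1]
  exact sum_congr rfl fun j _ => (add_one_mul_choose_eq n j).symm

end Nat

open Nat

theorem sum_Icc_mul_min_left (f : ℕ → ℕ) (a b : ℕ) :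
    ∑ x ∈ Icc a b, f x * min a x = a * ∑ x ∈ Icc a b, f x := by
  rw [mul_sum]
  refine sum_congr rfl fun x hx => ?_
  rw [min_eq_left (mem_Icc.mp hx).1, mul_comm]

theorem add_one_mul_two_pow_mul_two_pow_le (n w : ℕ) (hw : n + 1 ≤ w) :
    (n + 1) * 2 ^ n * 2 ^ w ≤
      4 * ∑ ζ ∈ Icc 1 (n + 1), (n + 1).choose ζ * ∑ ξ ∈ Icc ζ w, w.choose ξ * min ζ ξ := by
  set c := (n + 2) / 2
  calc (n + 1) * 2 ^ n * 2 ^ w ≤ (n + 1) * (2 * ∑ j ∈ range c, n.choose j) * 2 ^ w := by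
        gcongr
        exact two_pow_le_two_mul_sum_range_choose (by omega) (by omega)
    _ = 2 * ∑ ζ ∈ Icc 1 c, (n + 1).choose ζ * ζ * 2 ^ w := by
        rw [← sum_mul, sum_Icc_choose_mul_self]
        ring
    _ ≤ 2 * ∑ ζ ∈ Icc 1 c, (n + 1).choose ζ * ζ * (2 * ∑ ξ ∈ Icc ζ w, w.choose ξ) := by
        gcongr with ζ hζ
        exact two_pow_le_two_mul_sum_Icc_choose (by have := (mem_Icc.mp hζ).2; omega)
    _ = 4 * ∑ ζ ∈ Icc 1 c, (n + 1).choose ζ * ∑ ξ ∈ Icc ζ w, w.choose ξ * min ζ ξ := by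
        rw [mul_sum, mul_sum]
        refine sum_congr rfl fun ζ _ => ?_
        rw [sum_Icc_mul_min_left]
        ring
    _ ≤ 4 * ∑ ζ ∈ Icc 1 (n + 1), (n + 1).choose ζ * ∑ ξ ∈ Icc ζ w, w.choose ξ * min ζ ξ := by
        gcongr
        omega

theorem double_sum_choose_min_ge (u w : ℕ) (hu : 1 ≤ u) (huw : u ≤ w) :
    (u : ℝ) / 8 * 2 ^ (u + w) ≤
      ∑ ζ ∈ Finset.Icc 1 u, (u.choose ζ : ℝ) *
        ∑ ξ ∈ Finset.Icc ζ w, (w.choose ξ : ℝ) * (min ζ ξ : ℕ) := by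
  obtain ⟨n, rfl⟩ := Nat.exists_eq_add_of_le' hu
  have h : ((n + 1) * 2 ^ n * 2 ^ w : ℝ) ≤
      4 * ∑ ζ ∈ Icc 1 (n + 1), ((n + 1).choose ζ : ℝ) *
        ∑ ξ ∈ Icc ζ w, (w.choose ξ : ℝ) * (min ζ ξ : ℕ) := by
    exact_mod_cast add_one_mul_two_pow_mul_two_pow_le n w huw
  rw [pow_add, pow_succ]
  push_cast at h ⊢
  linarith
end

section
/- Let h: {0,1}^n → {0,1} be a monotone conjunction on a set S of k variables (h(x)=1 iff x_i=1 for all i ∈ S), with 1 ≤ k ≤ n. Define σ(x) as the minimum Hamming distance from x to some x' with h(x') ≠ h(x). Then the expectation of σ(x) over x uniform in {0,1}^n equals k/2 + 2^(-k). -/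
private theorem cnt_aux (n : ℕ) (T : Finset (Fin n)) (b : Bool) :
    (Finset.univ.filter fun x : Fin n → Bool => ∀ i ∈ T, x i = b).card = 2 ^ (n - T.card) := by
  classical
  rw [Finset.card_filter]
  have key : ∀ x : Fin n → Bool,
      (if (∀ i ∈ T, x i = b) then (1:ℕ) else 0)
        = ∏ i : Fin n, (if i ∈ T then (if x i = b then 1 else 0) else 1) := by
    intro x
    rw [Finset.prod_ite_mem, Finset.univ_inter, Finset.prod_boole]
    simp
  simp_rw [key]
  rw [← Fintype.piFinset_univ,
    ← Finset.prod_univ_sum (fun _ => (Finset.univ : Finset Bool))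
      (fun i c => if i ∈ T then (if c = b then (1:ℕ) else 0) else 1)]
  have h2 : ∀ i : Fin n, (∑ b' : Bool, (if i ∈ T then (if b' = b then (1:ℕ) else 0) else 1))
      = if i ∈ T then 1 else 2 := by
    intro i
    by_cases hi : i ∈ T <;> simp [hi, Finset.sum_ite_eq]
  simp_rw [h2]
  rw [← Finset.prod_mul_prod_compl T]
  have e1 : (∏ i ∈ T, if i ∈ T then (1:ℕ) else 2) = 1 :=
    Finset.prod_eq_one (fun i hi => by simp [hi])
  have e2 : (∏ i ∈ Tᶜ, if i ∈ T then (1:ℕ) else 2) = 2 ^ (n - T.card) := by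
    rw [Finset.prod_congr rfl
      (fun i hi => by simp [Finset.mem_compl.mp hi] :
        ∀ i ∈ Tᶜ, (if i ∈ T then (1:ℕ) else 2) = 2)]
    rw [Finset.prod_const, Finset.card_compl]
    simp
  rw [e1, e2, one_mul]

private theorem sigma_eq_aux (n k : ℕ) (hk1 : 1 ≤ k) (S : Finset (Fin n)) (hS : S.card = k)
    (h : (Fin n → Bool) → Bool)
    (hdef : ∀ x : Fin n → Bool, h x = true ↔ ∀ i ∈ S, x i = true)
    (x : Fin n → Bool) :
    sInf {d : ℕ | ∃ x' : Fin n → Bool, h x' ≠ h x ∧ hammingDist x x' = d}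
      = max ((S.filter fun i => x i = false).card) 1 := by
  classical
  set m := (S.filter fun i => x i = false).card with hm
  by_cases h0 : m = 0
  · -- h x = true, answer 1
    have hx : h x = true := by
      rw [hdef]
      intro i hi
      by_contra hc
      have : i ∈ S.filter fun i => x i = false := by
        simp [hi, Bool.eq_false_iff.mpr hc]
      rw [Finset.card_eq_zero.mp h0] at this
      simp at this
    obtain ⟨i0, hi0⟩ : S.Nonempty := Finset.card_pos.mp (by omega)
    have hmem : 1 ∈ {d : ℕ | ∃ x' : Fin n → Bool, h x' ≠ h x ∧ hammingDist x x' = d} := by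
      refine ⟨Function.update x i0 false, ?_, ?_⟩
      · rw [hx]
        intro hc
        have := (hdef _).mp hc i0 hi0
        simp [Function.update] at this
      · unfold hammingDist
        have he : (Finset.univ.filter fun i => x i ≠ Function.update x i0 false i) = {i0} := by
          ext j
          rcases eq_or_ne j i0 with rfl | hj
          · simp [Function.update, (hdef x).mp hx _ hi0]
          · simp [Function.update, hj]
        rw [he, Finset.card_singleton]
    have hlb : ∀ d ∈ {d : ℕ | ∃ x' : Fin n → Bool, h x' ≠ h x ∧ hammingDist x x' = d},
        1 ≤ d := by
      rintro d ⟨x', hne, hd⟩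
      rcases Nat.eq_zero_or_pos d with rfl | hp
      · exact absurd (congrArg h (hammingDist_eq_zero.mp hd)).symm hne
      · exact hp
    have hsm := Nat.sInf_mem (⟨1, hmem⟩ : Set.Nonempty _)
    have h1 := Nat.sInf_le hmem
    have h2 := hlb _ hsm
    rw [h0]
    omega
  · -- h x = false, answer m
    have hfne : (S.filter fun i => x i = false).Nonempty := Finset.card_pos.mp (by omega)
    obtain ⟨j0, hj0⟩ := hfne
    simp only [Finset.mem_filter] at hj0
    have hx : h x = false := by
      rw [Bool.eq_false_iff]
      intro hc
      have := (hdef x).mp hc j0 hj0.1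
      rw [hj0.2] at this; exact Bool.false_ne_true this
    have hmem : m ∈ {d : ℕ | ∃ x' : Fin n → Bool, h x' ≠ h x ∧ hammingDist x x' = d} := by
      refine ⟨fun j => if j ∈ S then true else x j, ?_, ?_⟩
      · rw [hx, (hdef _).mpr (fun i hi => by simp [hi])]
        simp
      · unfold hammingDist
        rw [hm]
        congr 1
        ext j
        by_cases hj : j ∈ S
        · simp [hj]
        · simp [hj]
    have hlb : ∀ d ∈ {d : ℕ | ∃ x' : Fin n → Bool, h x' ≠ h x ∧ hammingDist x x' = d},
        m ≤ d := by
      rintro d ⟨x', hne, hd⟩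
      rw [hx] at hne
      have hx' : h x' = true := by
        cases hv : h x' with
        | false => exact absurd hv hne
        | true => rfl
      have hall := (hdef x').mp hx'
      rw [← hd]
      unfold hammingDist
      rw [hm]
      apply Finset.card_le_card
      intro i hi
      simp only [Finset.mem_filter] at hi ⊢
      refine ⟨Finset.mem_univ i, ?_⟩
      rw [hi.2, hall i hi.1]
      simp
    have hsm := Nat.sInf_mem (⟨m, hmem⟩ : Set.Nonempty _)
    have h1 := Nat.sInf_le hmem
    have h2 := hlb _ hsm
    omega

private theorem sum_max_aux (n k : ℕ) (hkn : k ≤ n) (S : Finset (Fin n)) (hS : S.card = k) :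
    ∑ x : Fin n → Bool, max ((S.filter fun i => x i = false).card) 1
      = k * 2^(n-1) + 2^(n-k) := by
  classical
  have hmax : ∀ m : ℕ, max m 1 = m + if m = 0 then 1 else 0 := by
    intro m; split <;> omega
  simp_rw [hmax]
  rw [Finset.sum_add_distrib]
  have hA : ∑ x : Fin n → Bool, (S.filter fun i => x i = false).card = k * 2^(n-1) := by
    simp_rw [Finset.card_filter]
    rw [Finset.sum_comm]
    have hone : ∀ i ∈ S, (∑ x : Fin n → Bool, if x i = false then 1 else 0) = 2^(n-1) := by
      intro i _
      rw [← Finset.card_filter]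
      have := cnt_aux n {i} false
      simpa using this
    rw [Finset.sum_congr rfl hone, Finset.sum_const, hS, smul_eq_mul]
  have hB : ∑ x : Fin n → Bool, (if (S.filter fun i => x i = false).card = 0 then 1 else 0)
      = 2^(n-k) := by
    have hiff : ∀ x : Fin n → Bool,
        ((S.filter fun i => x i = false).card = 0) ↔ (∀ i ∈ S, x i = true) := by
      intro x
      rw [Finset.card_eq_zero, Finset.filter_eq_empty_iff]
      simp
    simp_rw [hiff]
    rw [← Finset.card_filter, cnt_aux n S true, hS]
  rw [hA, hB]

/-- Prediction-change robustness of a monotone conjunction on `k` variables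
under the uniform distribution on `{0,1}^n` equals `k/2 + 2^(-k)`. -/
theorem monotone_conjunction_PC_robustness (n k : ℕ) (hk1 : 1 ≤ k) (hkn : k ≤ n)
    (S : Finset (Fin n)) (hS : S.card = k)
    (h : (Fin n → Bool) → Bool)
    (hdef : ∀ x : Fin n → Bool, h x = true ↔ ∀ i ∈ S, x i = true) :
    (∑ x : Fin n → Bool,
        ((sInf {d : ℕ | ∃ x' : Fin n → Bool, h x' ≠ h x ∧ hammingDist x x' = d} : ℕ) : ℝ))
        / 2 ^ n
      = (k : ℝ) / 2 + ((2 : ℝ) ^ k)⁻¹ := by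
  classical
  have hrw : ∀ x : Fin n → Bool,
      ((sInf {d : ℕ | ∃ x' : Fin n → Bool, h x' ≠ h x ∧ hammingDist x x' = d} : ℕ) : ℝ)
        = ((max ((S.filter fun i => x i = false).card) 1 : ℕ) : ℝ) := by
    intro x
    exact_mod_cast congrArg (Nat.cast (R := ℝ)) (sigma_eq_aux n k hk1 S hS h hdef x)
  rw [Finset.sum_congr rfl (fun x _ => hrw x), ← Nat.cast_sum,
    sum_max_aux n k hkn S hS]
  have e1 : (2:ℝ)^n = 2^(n-1) * 2 := by rw [← pow_succ]; congr 1; omega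
  have e2 : (2:ℝ)^n = 2^(n-k) * 2^k := by rw [← pow_add]; congr 1; omega
  have p3 : (2:ℝ)^k ≠ 0 := by positivity
  push_cast
  rw [e1]
  field_simp
  rw [e2] at e1
  nlinarith [e1]
end

section
/- Let h: {0,1}^n → {0,1} be a monotone conjunction on k variables, 1 ≤ k ≤ n, and let r ≥ 1 be an integer. Then the probability over uniform x ∈ {0,1}^n that there exists x' with Hamming distance HD(x,x') ≤ r and h(x') ≠ h(x) equals 2^(-k) · Σ_{i=0}^{r} C(k,i). -/
/-!
If the conjunction holds at `x`, flipping one coordinate of `S` falsifies it, so `x` is at risk as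
soon as `r ≥ 1`. If it fails at `x`, the nearest point where it holds is obtained by setting to
`true` the coordinates of `S` where `x` is `false`. Hence the points at risk are exactly those with
at most `r` zeros in `S`; the coordinates outside `S` are free, so there are
`2 ^ (n - k) * ∑_{i ≤ r} (k choose i)` of them.
-/

open Finset

section Counting

variable {α ι β : Type*} [Fintype α] [Fintype ι] [DecidableEq ι] [Fintype β]

def falseSetEquiv (α : Type*) [Fintype α] [DecidableEq α] : (α → Bool) ≃ Finset α where
  toFun a := {i | a i = false}
  invFun s i := decide (i ∉ s)
  left_inv a := by ext i; simp
  right_inv s := by ext i; simp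

theorem card_filter_card_le (r : ℕ) :
    #{s : Finset α | #s ≤ r} = ∑ i ∈ range (r + 1), (Fintype.card α).choose i := by
  rw [card_eq_sum_card_fiberwise (f := card) (t := range (r + 1))
    (fun s hs => by simpa [Nat.lt_succ_iff] using hs)]
  refine sum_congr rfl fun i hi => ?_
  have hfiber : ({s ∈ {s : Finset α | #s ≤ r} | #s = i} : Finset (Finset α))
      = ({s | #s = i} : Finset (Finset α)) := by
    ext s
    simp only [mem_filter, mem_univ, true_and, mem_range] at hi ⊢
    omega
  rw [hfiber, univ_filter_card_eq, card_powersetCard, card_univ]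

theorem card_filter_card_false_le [DecidableEq α] (r : ℕ) :
    #{a : α → Bool | #{i | a i = false} ≤ r} = ∑ i ∈ range (r + 1), (Fintype.card α).choose i :=
  (card_equiv (falseSetEquiv α) fun _ => by simp [falseSetEquiv]).trans (card_filter_card_le r)

theorem card_filter_restrict (S : Finset ι) (P : (S → β) → Prop) [DecidablePred P] :
    #{x : ι → β | P fun i => x i} = #{a | P a} * Fintype.card β ^ (Fintype.card ι - #S) := by
  simp only [← Fintype.card_subtype]
  have e : {x : ι → β // P fun i => x i} ≃ {a // P a} × ({i // i ∉ S} → β) :=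
    ((Equiv.piEquivPiSubtypeProd (· ∈ S) fun _ => β).subtypeEquiv (q := fun z => P z.1)
      fun _ => Iff.rfl).trans Equiv.prodSubtypeFstEquivSubtypeProd
  rw [Fintype.card_congr e, Fintype.card_prod, Fintype.card_fun, Fintype.card_subtype_compl,
    Fintype.card_coe]

theorem card_filter_card_false_on_le (S : Finset ι) (r : ℕ) :
    #{x : ι → Bool | #{i ∈ S | x i = false} ≤ r}
      = (∑ i ∈ range (r + 1), (#S).choose i) * 2 ^ (Fintype.card ι - #S) := by
  have hzeros (x : ι → Bool) : #{i ∈ S | x i = false} = #{i : S | x i = false} :=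
    (card_bij (fun i _ => i.1) (by simp) (by simp) (by simp +contextual)).symm
  simp_rw [hzeros]
  rw [card_filter_restrict S (fun a => #{i | a i = false} ≤ r), card_filter_card_false_le,
    Fintype.card_coe, Fintype.card_bool]

end Counting

section Conjunction

variable {ι : Type*} [Fintype ι] {S : Finset ι}

theorem hammingDist_update_le_one [DecidableEq ι] {β : ι → Type*} [∀ i, DecidableEq (β i)]
    (x : ∀ i, β i) (j : ι) (b : β j) : hammingDist x (Function.update x j b) ≤ 1 := by
  refine (card_le_card fun i hi => ?_).trans (card_singleton j).le
  by_contra hij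
  simp_all [Function.update_of_ne (mem_singleton.not.mp hij)]

theorem card_filter_false_le_hammingDist {x y : ι → Bool} (hy : ∀ i ∈ S, y i = true) :
    #{i ∈ S | x i = false} ≤ hammingDist x y :=
  card_le_card fun i hi => by
    simp only [mem_filter] at hi
    simp [hi.2, hy i hi.1]

theorem hammingDist_piecewise_true [DecidableEq ι] (x : ι → Bool) :
    hammingDist x (S.piecewise (fun _ => true) x) = #{i ∈ S | x i = false} := by
  unfold hammingDist
  congr 1
  ext i
  by_cases hi : i ∈ S <;> simp [hi]

theorem exists_hammingDist_le_ne_iff [DecidableEq ι] {h : (ι → Bool) → Bool}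
    (hdef : ∀ x, h x = true ↔ ∀ i ∈ S, x i = true) (hS : S.Nonempty) {r : ℕ} (hr : 1 ≤ r)
    (x : ι → Bool) :
    (∃ x', hammingDist x x' ≤ r ∧ h x' ≠ h x) ↔ #{i ∈ S | x i = false} ≤ r := by
  cases hx : h x
  · simp only [ne_eq, Bool.not_eq_false]
    constructor
    · rintro ⟨x', hdist, hx'⟩
      exact (card_filter_false_le_hammingDist ((hdef x').1 hx')).trans hdist
    · intro hzeros
      exact ⟨_, (hammingDist_piecewise_true x).trans_le hzeros,
        (hdef _).2 fun i hi => by simp [hi]⟩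
  · obtain ⟨j, hj⟩ := hS
    have hno_zeros : #{i ∈ S | x i = false} = 0 :=
      card_eq_zero.2 <| filter_eq_empty_iff.2 fun i hi => by simp [(hdef x).1 hx i hi]
    refine iff_of_true ⟨Function.update x j false, (hammingDist_update_le_one x j _).trans hr, ?_⟩
      (by omega)
    rw [ne_eq, hdef]
    exact fun hall => by simpa using hall j hj

end Conjunction

theorem monotone_conjunction_PC_risk_general (n k r : ℕ) (hk1 : 1 ≤ k) (hr : 1 ≤ r)
    (S : Finset (Fin n)) (hS : S.card = k)
    (h : (Fin n → Bool) → Bool)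
    (hdef : ∀ x : Fin n → Bool, h x = true ↔ ∀ i ∈ S, x i = true) :
    (Nat.card {x : Fin n → Bool //
        ∃ x' : Fin n → Bool, hammingDist x x' ≤ r ∧ h x' ≠ h x} : ℝ) / 2 ^ n
      = ((2 : ℝ) ^ k)⁻¹ * ∑ i ∈ Finset.range (r + 1), (k.choose i : ℝ) := by
  have hkn : k ≤ n := hS ▸ S.card_le_univ.trans_eq (Fintype.card_fin n)
  have hrisk := exists_hammingDist_le_ne_iff hdef (card_pos.mp (hS ▸ hk1)) hr
  rw [Nat.card_congr (Equiv.subtypeEquivRight hrisk), Nat.card_eq_fintype_card,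
    Fintype.card_subtype, card_filter_card_false_on_le, hS, Fintype.card_fin]
  push_cast
  rw [pow_sub₀ _ two_ne_zero hkn]
  field_simp

/-- Prediction-change adversarial risk of a monotone conjunction on `k` variables
under `r`-perturbations, for uniform instances over `{0,1}^n`. -/
theorem monotone_conjunction_PC_risk (n k r : ℕ) (hk1 : 1 ≤ k) (hkn : k ≤ n) (hr : 1 ≤ r)
    (S : Finset (Fin n)) (hS : S.card = k)
    (h : (Fin n → Bool) → Bool)
    (hdef : ∀ x : Fin n → Bool, h x = true ↔ ∀ i ∈ S, x i = true) :
    (Nat.card {x : Fin n → Bool //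
        ∃ x' : Fin n → Bool, hammingDist x x' ≤ r ∧ h x' ≠ h x} : ℝ) / 2 ^ n
      = ((2 : ℝ) ^ k)⁻¹ * ∑ i ∈ Finset.range (r + 1), (k.choose i : ℝ) :=
  monotone_conjunction_PC_risk_general n k r hk1 hr S hS h hdef
end

section
/- Let c and h be distinct monotone conjunctions over {0,1}^n (each a conjunction of a nonempty set of variables). Define Rob = E_{x uniform} [ min { HD(x,x') : h(x') ≠ c(x') } ], the expected Hamming distance to the error region. Then Rob ≤ 1 + min(|h|, |c|), where |h| and |c| are the numbers of variables in h and c respectively. -/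
lemma ER_key {n : ℕ} (Sh Sc : Finset (Fin n)) (i : Fin n) (hi : i ∈ Sc) (hni : i ∉ Sh)
    (x : Fin n → Bool) :
    sInf {d : ℕ | ∃ x' : Fin n → Bool,
        ¬((∀ j ∈ Sh, x' j = true) ↔ (∀ j ∈ Sc, x' j = true)) ∧
        hammingDist x x' = d} ≤ Sh.card + 1 := by
  classical
  set x' : Fin n → Bool := fun j => if j ∈ Sh then true else if j = i then false else x j
    with hx'
  have hmem : hammingDist x x' ∈ {d : ℕ | ∃ x' : Fin n → Bool,
      ¬((∀ j ∈ Sh, x' j = true) ↔ (∀ j ∈ Sc, x' j = true)) ∧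
      hammingDist x x' = d} := by
    refine ⟨x', ?_, rfl⟩
    intro hiff
    have hh : ∀ j ∈ Sh, x' j = true := by
      intro j hj; simp [hx', hj]
    have hc := hiff.mp hh i hi
    simp [hx', hni] at hc
  have hd : hammingDist x x' ≤ Sh.card + 1 := by
    have hsub : (Finset.univ.filter fun j => x j ≠ x' j) ⊆ insert i Sh := by
      intro j hj
      simp only [Finset.mem_filter, Finset.mem_univ, true_and] at hj
      by_contra hno
      simp only [Finset.mem_insert, not_or] at hno
      apply hj
      simp [hx', hno.1, hno.2]
    calc hammingDist x x' = (Finset.univ.filter fun j => x j ≠ x' j).card := rfl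
      _ ≤ (insert i Sh).card := Finset.card_le_card hsub
      _ ≤ Sh.card + 1 := Finset.card_insert_le _ _
  exact le_trans (Nat.sInf_le hmem) hd

/-- Error-region robustness upper bound for two distinct monotone conjunctions. -/
theorem ER_robustness_upper (n : ℕ) (Sh Sc : Finset (Fin n))
    (hSh : Sh.Nonempty) (hSc : Sc.Nonempty) (hne : Sh ≠ Sc) :
    (∑ x : Fin n → Bool,
        ((sInf {d : ℕ | ∃ x' : Fin n → Bool,
            ¬((∀ i ∈ Sh, x' i = true) ↔ (∀ i ∈ Sc, x' i = true)) ∧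
            hammingDist x x' = d} : ℕ) : ℝ)) / 2 ^ n
      ≤ 1 + (min Sh.card Sc.card : ℝ) := by
  classical
  have key : ∀ x : Fin n → Bool,
      (sInf {d : ℕ | ∃ x' : Fin n → Bool,
          ¬((∀ i ∈ Sh, x' i = true) ↔ (∀ i ∈ Sc, x' i = true)) ∧
          hammingDist x x' = d}) ≤ min Sh.card Sc.card + 1 := by
    intro x
    rcases le_or_gt Sh.card Sc.card with hle | hlt
    · -- min = Sh.card, need i ∈ Sc \ Sh
      have hex : ∃ i, i ∈ Sc ∧ i ∉ Sh := by
        by_contra h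
        push_neg at h
        have hsub : Sc ⊆ Sh := fun j hj => h j hj
        exact hne ((Finset.eq_of_subset_of_card_le hsub hle).symm)
      obtain ⟨i, hi, hni⟩ := hex
      have := ER_key Sh Sc i hi hni x
      rw [min_eq_left hle]
      exact this
    · have hex : ∃ i, i ∈ Sh ∧ i ∉ Sc := by
        by_contra h
        push_neg at h
        have hsub : Sh ⊆ Sc := fun j hj => h j hj
        exact hne (Finset.eq_of_subset_of_card_le hsub hlt.le)
      obtain ⟨i, hi, hni⟩ := hex
      have h2 := ER_key Sc Sh i hi hni x
      have heq : {d : ℕ | ∃ x' : Fin n → Bool,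
            ¬((∀ j ∈ Sc, x' j = true) ↔ (∀ j ∈ Sh, x' j = true)) ∧
            hammingDist x x' = d} =
          {d : ℕ | ∃ x' : Fin n → Bool,
            ¬((∀ j ∈ Sh, x' j = true) ↔ (∀ j ∈ Sc, x' j = true)) ∧
            hammingDist x x' = d} := by
        ext d
        constructor <;> rintro ⟨x', hx', rfl⟩ <;> exact ⟨x', fun h => hx' h.symm, rfl⟩
      rw [heq] at h2
      rw [min_eq_right hlt.le]
      exact h2
  have hsum : (∑ x : Fin n → Bool,
      ((sInf {d : ℕ | ∃ x' : Fin n → Bool,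
          ¬((∀ i ∈ Sh, x' i = true) ↔ (∀ i ∈ Sc, x' i = true)) ∧
          hammingDist x x' = d} : ℕ) : ℝ))
      ≤ (2 ^ n : ℝ) * (1 + (min Sh.card Sc.card : ℝ)) := by
    calc (∑ x : Fin n → Bool, ((sInf {d : ℕ | ∃ x' : Fin n → Bool,
          ¬((∀ i ∈ Sh, x' i = true) ↔ (∀ i ∈ Sc, x' i = true)) ∧
          hammingDist x x' = d} : ℕ) : ℝ))
        ≤ ∑ _x : Fin n → Bool, (1 + (min Sh.card Sc.card : ℝ)) := by
          apply Finset.sum_le_sum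
          intro x _
          have := key x
          have : ((sInf {d : ℕ | ∃ x' : Fin n → Bool,
              ¬((∀ i ∈ Sh, x' i = true) ↔ (∀ i ∈ Sc, x' i = true)) ∧
              hammingDist x x' = d} : ℕ) : ℝ) ≤ ((min Sh.card Sc.card + 1 : ℕ) : ℝ) := by
            exact_mod_cast this
          push_cast at this
          linarith
      _ = (2 ^ n : ℝ) * (1 + (min Sh.card Sc.card : ℝ)) := by
          rw [Finset.sum_const]
          simp [Finset.card_univ, Nat.cast_min]
          ring
  have hpos : (0 : ℝ) < 2 ^ n := by positivity
  rw [div_le_iff₀ hpos]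
  calc _ ≤ (2 ^ n : ℝ) * (1 + (min Sh.card Sc.card : ℝ)) := hsum
    _ = (1 + (min Sh.card Sc.card : ℝ)) * 2 ^ n := by ring
end

section
/- Let c and h be distinct monotone conjunctions over {0,1}^n with m ≥ 1 shared variables, u ≥ 1 variables only in c, and w ≥ 1 variables only in h. Define Rob = E_{x uniform} [ min { HD(x,x') : h(x') ≠ c(x') } ]. Then Rob ≥ min(|h|,|c|)/16, where |h| = m+w and |c| = m+u. -/
/-!
A point `x` at Hamming distance `d` from the error region of the conjunctions over `P` and `Q`
is `d` flips away from satisfying one of them, so `d` is at least the number of zeros of `x` on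
`P` or on `Q`; with `P = A ∪ C` and `Q = A ∪ B` this is `Z_A + min Z_B Z_C`, where `Z_S` counts
the zeros on `S`. Now `E Z_A = |A|/2`, and since `Z_B ≤ |B|` and `Z_C ≤ |C|` we have
`max |B| |C| * min Z_B Z_C ≥ Z_B Z_C`, whose mean is `|B| |C| / 4` by independence of disjoint
coordinates. Hence `Rob ≥ |A|/2 + min |B| |C| / 4`.
-/

open Finset

namespace MonotoneConjunction

variable {ι : Type*}

def zeroCount (S : Finset ι) (x : ι → Bool) : ℕ := #{i ∈ S | x i = false}

noncomputable def distToErrorRegion [Fintype ι] (P Q : Finset ι) (x : ι → Bool) : ℕ :=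
  sInf {d | ∃ y : ι → Bool, ¬((∀ i ∈ P, y i = true) ↔ (∀ i ∈ Q, y i = true)) ∧
    hammingDist x y = d}

theorem zeroCount_le_card (S : Finset ι) (x : ι → Bool) : zeroCount S x ≤ #S :=
  card_filter_le _ _

theorem zeroCount_union [DecidableEq ι] {S T : Finset ι} (h : Disjoint S T) (x : ι → Bool) :
    zeroCount (S ∪ T) x = zeroCount S x + zeroCount T x := by
  rw [zeroCount, filter_union, card_union_of_disjoint (disjoint_filter_filter h)]
  rfl

theorem mul_le_max_mul_min {a b A B : ℕ} (ha : a ≤ A) (hb : b ≤ B) :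
    a * b ≤ max A B * min a b := by
  rcases le_total a b with hab | hab
  · rw [min_eq_left hab, mul_comm a]
    exact Nat.mul_le_mul_right _ (hb.trans (le_max_right _ _))
  · rw [min_eq_right hab]
    exact Nat.mul_le_mul_right _ (ha.trans (le_max_left _ _))

section Distance

variable [Fintype ι]

theorem zeroCount_le_hammingDist {S : Finset ι} {y : ι → Bool} (hy : ∀ i ∈ S, y i = true)
    (x : ι → Bool) : zeroCount S x ≤ hammingDist x y :=
  card_le_card fun i hi => by
    rw [mem_filter] at hi ⊢
    exact ⟨mem_univ i, by simp [hi.2, hy i hi.1]⟩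

theorem min_zeroCount_le_hammingDist {P Q : Finset ι} {y : ι → Bool}
    (hy : ¬((∀ i ∈ P, y i = true) ↔ (∀ i ∈ Q, y i = true))) (x : ι → Bool) :
    min (zeroCount P x) (zeroCount Q x) ≤ hammingDist x y := by
  by_cases hP : ∀ i ∈ P, y i = true
  · exact (min_le_left _ _).trans (zeroCount_le_hammingDist hP x)
  · have hQ : ∀ i ∈ Q, y i = true := by tauto
    exact (min_le_right _ _).trans (zeroCount_le_hammingDist hQ x)

theorem min_zeroCount_le_distToErrorRegion {P Q : Finset ι} (hQP : ¬Q ⊆ P) (x : ι → Bool) :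
    min (zeroCount P x) (zeroCount Q x) ≤ distToErrorRegion P Q x := by
  classical
  obtain ⟨q, hqQ, hqP⟩ := not_subset.mp hQP
  refine le_csInf ⟨_, fun i => decide (i ∈ P), ?_, rfl⟩ ?_
  · intro hiff
    simpa [hqP] using hiff.mp (fun i hi => by simpa using hi) q hqQ
  · rintro _ ⟨y, hy, rfl⟩
    exact min_zeroCount_le_hammingDist hy x

end Distance

section Counting

variable [Fintype ι] [DecidableEq ι]

theorem card_forall_eq_false_mul_two_pow (I : Finset ι) :
    #{x : ι → Bool | ∀ i ∈ I, x i = false} * 2 ^ #I = 2 ^ Fintype.card ι := by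
  have hpi : ({x : ι → Bool | ∀ i ∈ I, x i = false} : Finset _) =
      Fintype.piFinset fun i => if i ∈ I then {false} else univ := by
    ext x
    simp only [mem_filter, mem_univ, true_and, Fintype.mem_piFinset]
    refine forall_congr' fun i => ?_
    split_ifs <;> simp [*]
  rw [hpi, Fintype.card_piFinset, ← card_compl_add_card I]
  simp only [apply_ite, card_singleton, card_univ, Fintype.card_bool, prod_ite, prod_const_one,
    prod_const, one_mul, pow_add]
  rw [filter_notMem_eq_sdiff, ← compl_eq_univ_sdiff]

theorem sum_zeroCount_mul_two (S : Finset ι) :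
    (∑ x : ι → Bool, zeroCount S x) * 2 = #S * 2 ^ Fintype.card ι := by
  simp_rw [zeroCount, card_filter]
  rw [sum_comm, sum_mul, card_eq_sum_ones, sum_mul]
  refine sum_congr rfl fun i _ => ?_
  rw [← card_filter, one_mul, ← card_forall_eq_false_mul_two_pow {i}]
  simp

theorem sum_zeroCount_mul_zeroCount_mul_four {S T : Finset ι} (h : Disjoint S T) :
    (∑ x : ι → Bool, zeroCount S x * zeroCount T x) * 4 = #S * #T * 2 ^ Fintype.card ι := by
  simp_rw [zeroCount, card_filter, sum_mul_sum, ite_zero_mul_ite_zero, mul_one]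
  rw [sum_comm]
  simp_rw [sum_comm (s := univ), ← card_filter, sum_mul]
  have hpair : ∀ i ∈ S, ∀ j ∈ T,
      #{x : ι → Bool | x i = false ∧ x j = false} * 4 = 2 ^ Fintype.card ι := by
    intro i hi j hj
    rw [← card_forall_eq_false_mul_two_pow {i, j}, card_pair (h.forall_ne_finset hi hj)]
    simp
  rw [sum_congr rfl fun i hi => sum_congr rfl (hpair i hi)]
  simp [mul_assoc]

theorem min_card_mul_two_pow_le_four_mul_sum_min {S T : Finset ι} (h : Disjoint S T) :
    min #S #T * 2 ^ Fintype.card ι ≤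
      4 * ∑ x : ι → Bool, min (zeroCount S x) (zeroCount T x) := by
  rcases Nat.eq_zero_or_pos (max #S #T) with h0 | hpos
  · have : min #S #T = 0 := Nat.eq_zero_of_le_zero (h0 ▸ min_le_max)
    simp [this]
  refine Nat.le_of_mul_le_mul_left ?_ hpos
  calc max #S #T * (min #S #T * 2 ^ Fintype.card ι)
      = (∑ x : ι → Bool, zeroCount S x * zeroCount T x) * 4 := by
        rw [sum_zeroCount_mul_zeroCount_mul_four h, ← min_mul_max #S #T]; ring
    _ ≤ (∑ x : ι → Bool, max #S #T * min (zeroCount S x) (zeroCount T x)) * 4 := by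
        refine Nat.mul_le_mul_right _ (sum_le_sum fun x _ => ?_)
        exact mul_le_max_mul_min (zeroCount_le_card S x) (zeroCount_le_card T x)
    _ = max #S #T * (4 * ∑ x : ι → Bool, min (zeroCount S x) (zeroCount T x)) := by
        rw [← mul_sum]; ring

theorem le_four_mul_sum_distToErrorRegion {A B C : Finset ι}
    (hAB : Disjoint A B) (hAC : Disjoint A C) (hBC : Disjoint B C) (hB : B.Nonempty) :
    (2 * #A + min #B #C) * 2 ^ Fintype.card ι ≤
      4 * ∑ x : ι → Bool, distToErrorRegion (A ∪ C) (A ∪ B) x := by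
  have hBA : ¬A ∪ B ⊆ A ∪ C := fun hsub => by
    obtain ⟨b, hb⟩ := hB
    rcases mem_union.mp (hsub (mem_union_right A hb)) with hbA | hbC
    · exact hAB.forall_ne_finset hbA hb rfl
    · exact hBC.forall_ne_finset hb hbC rfl
  have hpoint : ∀ x, zeroCount A x + min (zeroCount B x) (zeroCount C x) ≤
      distToErrorRegion (A ∪ C) (A ∪ B) x := fun x => by
    have := min_zeroCount_le_distToErrorRegion hBA x
    rwa [zeroCount_union hAC, zeroCount_union hAB, min_add_add_left, min_comm] at this
  calc (2 * #A + min #B #C) * 2 ^ Fintype.card ι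
      = 2 * ((∑ x : ι → Bool, zeroCount A x) * 2) + min #B #C * 2 ^ Fintype.card ι := by
        rw [sum_zeroCount_mul_two]; ring
    _ ≤ 2 * ((∑ x : ι → Bool, zeroCount A x) * 2) +
          4 * ∑ x : ι → Bool, min (zeroCount B x) (zeroCount C x) := by
        exact Nat.add_le_add_left (min_card_mul_two_pow_le_four_mul_sum_min hBC) _
    _ = 4 * ∑ x : ι → Bool, (zeroCount A x + min (zeroCount B x) (zeroCount C x)) := by
        rw [sum_add_distrib]; ring
    _ ≤ 4 * ∑ x : ι → Bool, distToErrorRegion (A ∪ C) (A ∪ B) x := by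
        gcongr with x; exact hpoint x

end Counting

end MonotoneConjunction

open MonotoneConjunction in
theorem ER_robustness_lower_general (n m u w : ℕ) (hu : 1 ≤ u)
    (A B C : Finset (Fin n))
    (hAB : Disjoint A B) (hAC : Disjoint A C) (hBC : Disjoint B C)
    (hA : A.card = m) (hB : B.card = u) (hC : C.card = w) :
    (min (m + w) (m + u) : ℝ) / 16 ≤
      (∑ x : Fin n → Bool,
        ((sInf {d : ℕ | ∃ x' : Fin n → Bool,
            ¬((∀ i ∈ A ∪ C, x' i = true) ↔ (∀ i ∈ A ∪ B, x' i = true)) ∧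
            hammingDist x x' = d} : ℕ) : ℝ)) / 2 ^ n := by
  subst hA hB hC
  have hsum : (2 * #A + min (#B : ℝ) #C) * 2 ^ n ≤
      4 * ∑ x : Fin n → Bool, (distToErrorRegion (A ∪ C) (A ∪ B) x : ℝ) := by
    have := le_four_mul_sum_distToErrorRegion hAB hAC hBC (card_pos.mp hu)
    rw [Fintype.card_fin] at this
    exact_mod_cast this
  rw [le_div_iff₀ (by positivity), min_add_add_left, min_comm]
  have hA₀ : (0 : ℝ) ≤ #A * 2 ^ n := by positivity
  have hmin₀ : (0 : ℝ) ≤ min (#B : ℝ) #C * 2 ^ n := by positivity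
  change _ ≤ ∑ x : Fin n → Bool, (distToErrorRegion (A ∪ C) (A ∪ B) x : ℝ)
  linarith

/-- Error-region robustness lower bound for two distinct monotone conjunctions with
`m ≥ 1` shared, `u ≥ 1` only-in-`c`, and `w ≥ 1` only-in-`h` variables. -/
theorem ER_robustness_lower (n m u w : ℕ) (hm : 1 ≤ m) (hu : 1 ≤ u) (hw : 1 ≤ w)
    (A B C : Finset (Fin n))
    (hAB : Disjoint A B) (hAC : Disjoint A C) (hBC : Disjoint B C)
    (hA : A.card = m) (hB : B.card = u) (hC : C.card = w)
    (hle : m + u + w ≤ n) :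
    (min (m + w) (m + u) : ℝ) / 16 ≤
      (∑ x : Fin n → Bool,
        ((sInf {d : ℕ | ∃ x' : Fin n → Bool,
            ¬((∀ i ∈ A ∪ C, x' i = true) ↔ (∀ i ∈ A ∪ B, x' i = true)) ∧
            hammingDist x x' = d} : ℕ) : ℝ)) / 2 ^ n :=
  ER_robustness_lower_general n m u w hu A B C hAB hAC hBC hA hB hC
end

section
/- Let c be a monotone conjunction on variable set A with |A| = m ≥ 1, and h a monotone conjunction on A ∪ C where C is disjoint from A and |C| = w ≥ 1 (so h is a specialization of c). Then the expected Hamming distance from a uniform x ∈ {0,1}^n to the error region {x' : h(x') ≠ c(x')} equals m/2 + 2^(-w). -/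
lemma countAll (n : ℕ) (S : Finset (Fin n)) (b : Bool) :
    (Finset.univ.filter fun x : Fin n → Bool => ∀ i ∈ S, x i = b).card = 2 ^ (n - S.card) := by
  classical
  have h1 : (Finset.univ.filter fun x : Fin n → Bool => ∀ i ∈ S, x i = b)
      = Fintype.piFinset (fun i => if i ∈ S then {b} else Finset.univ) := by
    ext x
    simp only [Finset.mem_filter, Finset.mem_univ, true_and, Fintype.mem_piFinset]
    constructor
    · intro h i
      by_cases hi : i ∈ S <;> simp [hi, h i]
    · intro h i hi
      have := h i
      simpa [hi] using this
  rw [h1, Fintype.card_piFinset]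
  have h2 : ∀ i : Fin n, ((if i ∈ S then ({b} : Finset Bool) else Finset.univ)).card
      = if i ∈ S then 1 else 2 := by
    intro i; by_cases hi : i ∈ S <;> simp [hi]
  simp only [h2]
  rw [Finset.prod_ite, Finset.prod_const, Finset.prod_const, one_pow, one_mul]
  congr 1
  rw [Finset.filter_not, Finset.card_sdiff_of_subset (Finset.filter_subset _ _)]
  simp [Finset.filter_mem_eq_inter]

lemma err_iff (n : ℕ) (A C : Finset (Fin n)) (x' : Fin n → Bool) :
    ¬((∀ i ∈ A ∪ C, x' i = true) ↔ (∀ i ∈ A, x' i = true))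
      ↔ (∀ i ∈ A, x' i = true) ∧ ∃ j ∈ C, x' j = false := by
  classical
  constructor
  · intro hne
    have hQ : ∀ i ∈ A, x' i = true := by
      by_contra h
      exact hne ⟨fun hp i hi => hp i (Finset.mem_union_left _ hi), fun hq => absurd hq h⟩
    have hP : ¬ ∀ i ∈ A ∪ C, x' i = true := fun hp => hne ⟨fun _ => hQ, fun _ => hp⟩
    push_neg at hP
    obtain ⟨j, hj, hjf⟩ := hP
    refine ⟨hQ, j, ?_, by simpa using hjf⟩
    rcases Finset.mem_union.1 hj with h | h
    · exact absurd (hQ j h) hjf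
    · exact h
  · rintro ⟨hQ, j, hjC, hjf⟩ hiff
    have := hiff.mpr hQ j (Finset.mem_union_right _ hjC)
    simp [hjf] at this

lemma sInf_err (n : ℕ) (A C : Finset (Fin n)) (hAC : Disjoint A C) (hCne : C.Nonempty)
    (x : Fin n → Bool) :
    sInf {d : ℕ | ∃ x' : Fin n → Bool,
        ¬((∀ i ∈ A ∪ C, x' i = true) ↔ (∀ i ∈ A, x' i = true)) ∧
        hammingDist x x' = d}
    = (A.filter fun i => x i = false).card + (if ∀ i ∈ C, x i = true then 1 else 0) := by
  classical
  obtain ⟨i0, hi0⟩ := hCne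
  have hi0A : i0 ∉ A := fun h => (Finset.disjoint_left.1 hAC h) hi0
  set f := (A.filter fun i => x i = false).card + (if ∀ i ∈ C, x i = true then 1 else 0) with hf
  -- the witness point
  set x' : Fin n → Bool := fun i =>
    if i ∈ A then true else if (∀ j ∈ C, x j = true) ∧ i = i0 then false else x i with hx'
  have hA' : ∀ i ∈ A, x' i = true := by intro i hi; simp [hx', hi]
  have hC' : ∃ j ∈ C, x' j = false := by
    by_cases hall : ∀ j ∈ C, x j = true
    · refine ⟨i0, hi0, ?_⟩
      simp only [hx', if_neg hi0A]
      exact if_pos ⟨hall, trivial⟩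
    · push_neg at hall
      obtain ⟨j, hjC, hjf⟩ := hall
      have hjA : j ∉ A := fun h => (Finset.disjoint_left.1 hAC h) hjC
      refine ⟨j, hjC, ?_⟩
      simp only [hx', if_neg hjA]
      rw [if_neg]
      · simpa using hjf
      · rintro ⟨hall, -⟩; exact hjf (hall j hjC)
  have hdist : hammingDist x x' = f := by
    show (Finset.univ.filter fun i => x i ≠ x' i).card = f
    by_cases hall : ∀ j ∈ C, x j = true
    · have hset : (Finset.univ.filter fun i => x i ≠ x' i)
          = insert i0 (A.filter fun i => x i = false) := by
        ext i
        simp only [Finset.mem_filter, Finset.mem_univ, true_and, Finset.mem_insert]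
        by_cases hiA : i ∈ A
        · have : i ≠ i0 := fun h => hi0A (h ▸ hiA)
          simp [hx', hiA, this]
        · by_cases hii : i = i0
          · subst hii
            simp only [hx', if_neg hiA, if_pos (show (∀ j ∈ C, x j = true) ∧ i = i from ⟨hall, rfl⟩)]
            simp [hall i hi0]
            exact hall
          · simp [hx', hiA, hii]
      rw [hset, Finset.card_insert_of_notMem (by simp [hi0A]), hf, if_pos hall]
    · have hset : (Finset.univ.filter fun i => x i ≠ x' i)
          = A.filter fun i => x i = false := by
        ext i
        simp only [Finset.mem_filter, Finset.mem_univ, true_and]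
        by_cases hiA : i ∈ A
        · simp [hx', hiA]
        · have : ¬ ((∀ j ∈ C, x j = true) ∧ i = i0) := fun h => hall h.1
          simp [hx', hiA, this]
      rw [hset, hf, if_neg hall, add_zero]
  have hmem : f ∈ {d : ℕ | ∃ x' : Fin n → Bool,
      ¬((∀ i ∈ A ∪ C, x' i = true) ↔ (∀ i ∈ A, x' i = true)) ∧ hammingDist x x' = d} :=
    ⟨x', (err_iff n A C x').2 ⟨hA', hC'⟩, hdist⟩
  refine le_antisymm (Nat.sInf_le hmem) ?_
  apply le_csInf ⟨f, hmem⟩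
  rintro d ⟨y, hy, rfl⟩
  obtain ⟨hyA, j, hjC, hjf⟩ := (err_iff n A C y).1 hy
  show f ≤ (Finset.univ.filter fun i => x i ≠ y i).card
  have hsub : (A.filter fun i => x i = false) ⊆ Finset.univ.filter fun i => x i ≠ y i := by
    intro i hi
    simp only [Finset.mem_filter, Finset.mem_univ, true_and] at *
    rw [hi.2, hyA i hi.1]; simp
  by_cases hall : ∀ j ∈ C, x j = true
  · have hjA : j ∉ A := fun h => (Finset.disjoint_left.1 hAC h) hjC
    have hjmem : j ∈ Finset.univ.filter fun i => x i ≠ y i := by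
      simp [hall j hjC, hjf]
    have : insert j (A.filter fun i => x i = false) ⊆
        Finset.univ.filter fun i => x i ≠ y i := by
      intro i hi
      rcases Finset.mem_insert.1 hi with rfl | hi
      · exact hjmem
      · exact hsub hi
    calc f = (insert j (A.filter fun i => x i = false)).card := by
              rw [Finset.card_insert_of_notMem (by simp [hjA]), hf, if_pos hall]
      _ ≤ _ := Finset.card_le_card this
  · calc f = (A.filter fun i => x i = false).card := by rw [hf, if_neg hall, add_zero]
      _ ≤ _ := Finset.card_le_card hsub



/-- When the hypothesis `h` (on variables `A ∪ C`) is a specialization of the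
target `c` (on variables `A`), the expected Hamming distance of a uniform point
to the error region equals `m/2 + 2^(-w)`. -/
theorem ER_robustness_specialization (n m w : ℕ) (hm : 1 ≤ m) (hw : 1 ≤ w)
    (A C : Finset (Fin n)) (hAC : Disjoint A C)
    (hA : A.card = m) (hC : C.card = w) (hle : m + w ≤ n) :
    (∑ x : Fin n → Bool,
        ((sInf {d : ℕ | ∃ x' : Fin n → Bool,
            ¬((∀ i ∈ A ∪ C, x' i = true) ↔ (∀ i ∈ A, x' i = true)) ∧
            hammingDist x x' = d} : ℕ) : ℝ)) / 2 ^ n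
      = (m : ℝ) / 2 + ((2 : ℝ) ^ w)⁻¹ := by
  classical
  have hCne : C.Nonempty := Finset.card_pos.1 (by omega)
  have hsum : (∑ x : Fin n → Bool,
        ((sInf {d : ℕ | ∃ x' : Fin n → Bool,
            ¬((∀ i ∈ A ∪ C, x' i = true) ↔ (∀ i ∈ A, x' i = true)) ∧
            hammingDist x x' = d} : ℕ) : ℝ))
      = m * 2 ^ (n - 1) + 2 ^ (n - w) := by
    have step1 : ∀ x : Fin n → Bool,
        ((sInf {d : ℕ | ∃ x' : Fin n → Bool,
            ¬((∀ i ∈ A ∪ C, x' i = true) ↔ (∀ i ∈ A, x' i = true)) ∧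
            hammingDist x x' = d} : ℕ) : ℝ)
        = (∑ i ∈ A, if x i = false then (1:ℝ) else 0)
          + (if ∀ i ∈ C, x i = true then (1:ℝ) else 0) := by
      intro x
      rw [sInf_err n A C hAC hCne x]
      rw [Nat.cast_add]
      congr 1
      · rw [Finset.card_filter]
        push_cast
        rfl
      · split_ifs <;> simp
    rw [Finset.sum_congr rfl fun x _ => step1 x, Finset.sum_add_distrib]
    congr 1
    · rw [Finset.sum_comm]
      have inner : ∀ i : Fin n, (∑ x : Fin n → Bool, if x i = false then (1:ℝ) else 0)
          = 2 ^ (n - 1) := by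
        intro i
        rw [Finset.sum_boole]
        have : (Finset.univ.filter fun x : Fin n → Bool => x i = false)
            = Finset.univ.filter fun x : Fin n → Bool => ∀ j ∈ ({i} : Finset (Fin n)), x j = false := by
          apply Finset.filter_congr; intro x _; simp
        rw [this, countAll n {i} false]
        simp
      rw [Finset.sum_congr rfl fun i _ => inner i, Finset.sum_const, hA, nsmul_eq_mul]
    · rw [Finset.sum_boole]
      have : (Finset.univ.filter fun x : Fin n → Bool => ∀ i ∈ C, x i = true).card
          = 2 ^ (n - w) := by rw [countAll n C true, hC]
      rw [this]
      push_cast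
      rfl
  rw [hsum]
  have h1 : (2:ℝ) ^ (n - 1) * 2 = 2 ^ n := by
    rw [← pow_succ]; congr 1; omega
  have h2 : (2:ℝ) ^ (n - w) * 2 ^ w = 2 ^ n := by
    rw [← pow_add]; congr 1; omega
  have h2n : (2:ℝ) ^ n ≠ 0 := by positivity
  have h2w : (2:ℝ) ^ w ≠ 0 := by positivity
  field_simp
  linear_combination ((m:ℝ) * 2 ^ w) * h1 + 2 * h2
end

section
/- Let X be a finite metric space with integer-valued metric d and a probability measure. Suppose b: [0,1] → [0,1] is such that for every set A ⊆ X, the measure of the internal boundary IB(A) = { a ∈ A : ∃x ∉ A, d(a,x) ≤ 1 } is at least b(vol(A)). Then for every set A ⊆ X, the measure of the external boundary EB(A) = { x ∉ A : ∃a ∈ A, d(a,x) ≤ 1 } is at least inf { b(μ') : μ' − b(μ') ≥ vol(A) }. -/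
/-!
Enlarge `A` by its external boundary to `A' = A ∪ EB(A)`. Every internal boundary point of `A'`
lies outside `A` (a neighbour outside `A'` of a point of `A` would belong to `EB(A)`), so
`IB(A') ⊆ EB(A)`. Since `vol A' = vol A + vol EB(A)`, the hypothesis applied to `A'` gives
`b(vol A') ≤ vol EB(A)` and `vol A ≤ vol A' - b(vol A')`: the value `vol A'` is admissible in the
infimum, which is therefore at most `vol EB(A)`.
-/

open Finset

/-- Unlike `csInf_le_of_le`, no boundedness is needed: an unbounded set of reals has `sInf` zero. -/
lemma Real.sInf_le_of_le_of_nonneg {s : Set ℝ} {x c : ℝ} (hx : x ∈ s) (hxc : x ≤ c) (hc : 0 ≤ c) :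
    sInf s ≤ c := by
  by_cases hs : BddBelow s
  · exact csInf_le_of_le hs hx hxc
  · exact (Real.sInf_of_not_bddBelow hs).trans_le hc

namespace Finset

variable {X : Type*} [Fintype X] [DecidableEq X] (R : X → X → Prop) [DecidableRel R]

def internalBoundary (A : Finset X) : Finset X :=
  A.filter fun a => ∃ x, x ∉ A ∧ R a x

def externalBoundary (A : Finset X) : Finset X :=
  univ.filter fun x => x ∉ A ∧ ∃ a ∈ A, R a x

variable {R}

lemma disjoint_externalBoundary (A : Finset X) : Disjoint A (externalBoundary R A) :=
  disjoint_right.mpr fun _ hx => (mem_filter.mp hx).2.1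

lemma internalBoundary_union_externalBoundary_subset (A : Finset X) :
    internalBoundary R (A ∪ externalBoundary R A) ⊆ externalBoundary R A := by
  intro a ha
  obtain ⟨haA', x, hxA', hax⟩ := mem_filter.mp ha
  refine (mem_union.mp haA').resolve_left fun haA => hxA' (mem_union_right _ ?_)
  exact mem_filter.mpr ⟨mem_univ x, fun hxA => hxA' (mem_union_left _ hxA), a, haA, hax⟩

end Finset

theorem external_boundary_from_internal_general (X : Type*) [Fintype X] [DecidableEq X]
    (d : X → X → ℕ)
    (w : X → ℝ) (hw : ∀ x, 0 ≤ w x) (hsum : ∑ x, w x = 1)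
    (b : ℝ → ℝ)
    (hb : ∀ A : Finset X,
        b (∑ a ∈ A, w a) ≤ ∑ a ∈ A.filter (fun a => ∃ x, x ∉ A ∧ d a x ≤ 1), w a) :
    ∀ A : Finset X,
      sInf {y : ℝ | ∃ μ' ∈ Set.Icc (0 : ℝ) 1,
              (∑ a ∈ A, w a) ≤ μ' - b μ' ∧ y = b μ'}
        ≤ ∑ x ∈ Finset.univ.filter (fun x => x ∉ A ∧ ∃ a ∈ A, d a x ≤ 1), w x := by
  intro A
  set R : X → X → Prop := fun a x => d a x ≤ 1
  set EB := externalBoundary R A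
  set A' := A ∪ EB
  have hvol_A' : ∑ a ∈ A', w a = ∑ a ∈ A, w a + ∑ x ∈ EB, w x :=
    sum_union (disjoint_externalBoundary A)
  have hb_A' : b (∑ a ∈ A', w a) ≤ ∑ x ∈ EB, w x :=
    (hb A').trans <| sum_le_sum_of_subset_of_nonneg
      (internalBoundary_union_externalBoundary_subset A) fun x _ _ => hw x
  have hvol_nonneg : 0 ≤ ∑ a ∈ A', w a := sum_nonneg fun x _ => hw x
  have hvol_le_one : ∑ a ∈ A', w a ≤ 1 :=
    hsum ▸ sum_le_sum_of_subset_of_nonneg (subset_univ _) fun x _ _ => hw x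
  refine Real.sInf_le_of_le_of_nonneg ⟨_, ⟨hvol_nonneg, hvol_le_one⟩, ?_, rfl⟩ hb_A'
    (sum_nonneg fun x _ => hw x)
  linarith

/-- External boundary lower bounds follow from internal boundary lower bounds,
in any finite space with an integer-valued metric and a probability measure. -/
theorem external_boundary_from_internal (X : Type*) [Fintype X] [DecidableEq X]
    (d : X → X → ℕ)
    (hd_self : ∀ x, d x x = 0)
    (hd_eq : ∀ x y, d x y = 0 → x = y)
    (hd_symm : ∀ x y, d x y = d y x)
    (hd_tri : ∀ x y z, d x z ≤ d x y + d y z)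
    (w : X → ℝ) (hw : ∀ x, 0 ≤ w x) (hsum : ∑ x, w x = 1)
    (b : ℝ → ℝ)
    (hb : ∀ A : Finset X,
        b (∑ a ∈ A, w a) ≤ ∑ a ∈ A.filter (fun a => ∃ x, x ∉ A ∧ d a x ≤ 1), w a) :
    ∀ A : Finset X,
      sInf {y : ℝ | ∃ μ' ∈ Set.Icc (0 : ℝ) 1,
              (∑ a ∈ A, w a) ≤ μ' - b μ' ∧ y = b μ'}
        ≤ ∑ x ∈ Finset.univ.filter (fun x => x ∉ A ∧ ∃ a ∈ A, d a x ≤ 1), w x :=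
  external_boundary_from_internal_general X d w hw hsum b hb
end

section
/- Define BSize_n(k,λ) = 2^(-n)·(Σ_{i=0}^{k-1} C(n,i) + λ·C(n,k)) for k ∈ {0,...,n} and λ ∈ [0,1). For any nonempty set A ⊆ {0,1}^n, if (k,λ) = BSize^{-1}(vol(A)) — i.e., vol(A) = BSize_n(k,λ) — then for every r ≥ 0 the r-expansion A_r = { x : ∃a ∈ A, HD(x,a) ≤ r } satisfies vol(A_r) ≥ BSize_n(k+r, λ). -/
/-!
Harper's theorem by induction on the dimension, one expansion step at a time. Write `F(m)` for
the size of the `1`-expansion of the partial ball of size `m`; by Pascal's rule the partial ball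
of `{0,1}^(d+1)` has slices `x = F(y)` and `y` in `{0,1}^d`, and the expansion of those slices
is again that of the `(d+1)`-ball. A set `A` splits into slices `B`, `T` with `|T| ≤ |B|`, and
the slices of its expansion contain `N(B) ∪ T` and `N(T) ∪ B`. If `x ≤ |B|` this suffices
directly; otherwise `y < |T| ≤ |B| < x` and the claim `F(x) + F(y) ≤ F(|B|) + F(|T|)` is the
concavity of `F`, which is piecewise linear with slopes `C(d, j+1) / C(d, j)`, decreasing by
log-concavity of the binomial coefficients.
-/

noncomputable def BSize (n k : ℕ) (lam : ℝ) : ℝ :=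
  ((2 : ℝ) ^ n)⁻¹ * (∑ i ∈ Finset.range k, (n.choose i : ℝ) + lam * (n.choose k : ℝ))

open Finset

noncomputable def partialBallCard (n k : ℕ) (lam : ℝ) : ℝ :=
  ∑ i ∈ range k, (n.choose i : ℝ) + lam * n.choose k

theorem partialBallCard_eq_add (n k : ℕ) (lam : ℝ) :
    partialBallCard n k lam = partialBallCard n k 0 + lam * n.choose k := by
  simp [partialBallCard]

theorem partialBallCard_succ_zero (n k : ℕ) :
    partialBallCard n (k + 1) 0 = partialBallCard n k 0 + n.choose k := by
  simp [partialBallCard, sum_range_succ]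

theorem partialBallCard_succ_succ (n k : ℕ) (lam : ℝ) :
    partialBallCard (n + 1) (k + 1) lam =
      partialBallCard n (k + 1) lam + partialBallCard n k lam := by
  simp only [partialBallCard, sum_range_succ' _ k, Nat.choose_succ_succ', Nat.cast_add,
    sum_add_distrib, Nat.choose_zero_right]
  ring

theorem partialBallCard_zero_succ (k : ℕ) (lam : ℝ) : partialBallCard 0 (k + 1) lam = 1 := by
  simp [partialBallCard, sum_range_succ', Nat.choose_zero_succ]

theorem partialBallCard_zero_right (n : ℕ) (lam : ℝ) : partialBallCard n 0 lam = lam := by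
  simp [partialBallCard]

theorem partialBallCard_nonneg (n k : ℕ) {lam : ℝ} (h : 0 ≤ lam) :
    0 ≤ partialBallCard n k lam := by
  unfold partialBallCard
  positivity

theorem Nat.choose_succ_eq_zero {n k : ℕ} (h : n.choose k = 0) : n.choose (k + 1) = 0 := by
  rw [Nat.choose_eq_zero_iff] at h ⊢
  omega

theorem Nat.choose_mul_choose_add_two_le (n j : ℕ) :
    n.choose j * n.choose (j + 2) ≤ n.choose (j + 1) * n.choose (j + 1) := by
  have h₁ := Nat.choose_succ_right_eq n j
  have h₂ := Nat.choose_succ_right_eq n (j + 1)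
  refine Nat.le_of_mul_le_mul_right (c := (j + 1) * (j + 2)) ?_ (by positivity)
  calc n.choose j * n.choose (j + 2) * ((j + 1) * (j + 2))
      = n.choose j * (j + 1) * (n.choose (j + 1) * (n - (j + 1))) := by rw [← h₂]; ring
    _ = n.choose (j + 1) * (j + 1) * (n.choose j * (n - (j + 1))) := by ring
    _ ≤ n.choose (j + 1) * (j + 1) * (n.choose j * (n - j)) := by gcongr; omega
    _ ≤ n.choose (j + 1) * (j + 2) * (n.choose (j + 1) * (j + 1)) := by rw [← h₁]; gcongr; omega
    _ = n.choose (j + 1) * n.choose (j + 1) * ((j + 1) * (j + 2)) := by ring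

theorem Nat.choose_add_two_div_choose_succ_le (n j : ℕ) :
    (n.choose (j + 2) / n.choose (j + 1) : ℝ) ≤ n.choose (j + 1) / n.choose j := by
  rcases Nat.eq_zero_or_pos (n.choose (j + 1)) with h₁ | h₁
  · simp [h₁]
  have h₀ : 0 < n.choose j := Nat.pos_of_ne_zero fun h => h₁.ne' (Nat.choose_succ_eq_zero h)
  rw [div_le_div_iff₀ (by exact_mod_cast h₁) (by exact_mod_cast h₀)]
  exact_mod_cast (mul_comm _ _).le.trans (Nat.choose_mul_choose_add_two_le n j)

-- Concavity of the kink function `t ↦ min (s₀ * t) (s₁ * t)`, in majorization form.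
theorem mul_add_mul_le_min_add_min {s₀ s₁ x y t u : ℝ} (hs₁ : 0 ≤ s₁) (hs : s₁ ≤ s₀)
    (hy : y ≤ 0) (hx : 0 ≤ x) (hyt : y ≤ t) (htu : t ≤ u) (hsum : x + y ≤ u + t) :
    s₀ * y + s₁ * x ≤ min (s₀ * u) (s₁ * u) + min (s₀ * t) (s₁ * t) := by
  rcases min_cases (s₀ * u) (s₁ * u) with ⟨hu, -⟩ | ⟨hu, -⟩ <;>
  rcases min_cases (s₀ * t) (s₁ * t) with ⟨ht, -⟩ | ⟨ht, -⟩ <;> rw [hu, ht] <;> nlinarith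

-- `partialBallCard n (k + 1) lam` is the size of the `1`-expansion of the partial ball of size
-- `partialBallCard n k lam`, so this says that `N` bounds the expansion `F(m')` for all `m' ≤ m`.
def DominatesBallExpansion (n m N : ℕ) : Prop :=
  ∀ k lam, 0 ≤ lam → lam < 1 → partialBallCard n k lam ≤ m → partialBallCard n (k + 1) lam ≤ N

namespace DominatesBallExpansion

variable {n m N : ℕ}

theorem mono (h : DominatesBallExpansion n m N) {N' : ℕ} (hN : N ≤ N') :
    DominatesBallExpansion n m N' := fun k lam h₀ h₁ hk =>
  (h k lam h₀ h₁ hk).trans (by exact_mod_cast hN)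

theorem affine_le (h : DominatesBallExpansion n m N) {k : ℕ}
    (hlo : partialBallCard n k 0 ≤ m) (hhi : m < partialBallCard n (k + 1) 0) :
    partialBallCard n (k + 1) 0 + n.choose (k + 1) / n.choose k * (m - partialBallCard n k 0)
      ≤ N := by
  rw [partialBallCard_succ_zero] at hhi
  have hc : (0 : ℝ) < n.choose k := by linarith
  set μ := (m - partialBallCard n k 0) / n.choose k
  have hμ : μ * n.choose k = m - partialBallCard n k 0 := div_mul_cancel₀ _ hc.ne'
  have hball : partialBallCard n k μ = m := by rw [partialBallCard_eq_add]; linarith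
  have := h k μ (div_nonneg (by linarith) hc.le) ((div_lt_one hc).2 (by linarith)) hball.le
  rw [partialBallCard_eq_add] at this
  calc _ = partialBallCard n (k + 1) 0 + μ * n.choose (k + 1) := by
        rw [← hμ]; field_simp
    _ ≤ N := this

theorem add_min_le (h : DominatesBallExpansion n m N) {j : ℕ}
    (hlo : partialBallCard n j 0 ≤ m) (hhi : m < partialBallCard n (j + 2) 0) :
    partialBallCard n (j + 2) 0 +
        min (n.choose (j + 1) / n.choose j * (m - partialBallCard n (j + 1) 0))
          (n.choose (j + 2) / n.choose (j + 1) * (m - partialBallCard n (j + 1) 0)) ≤ N := by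
  rcases lt_or_ge (m : ℝ) (partialBallCard n (j + 1) 0) with hm | hm
  · refine (add_le_add_right (min_le_left _ _) _).trans (le_of_eq_of_le ?_ (h.affine_le hlo hm))
    rw [partialBallCard_succ_zero] at hm
    have hc : (n.choose j : ℝ) ≠ 0 := by linarith
    rw [partialBallCard_succ_zero n (j + 1), partialBallCard_succ_zero n j]
    field_simp
    ring
  · exact (add_le_add_right (min_le_right _ _) _).trans (h.affine_le hm hhi)

end DominatesBallExpansion

theorem partialBallCard_add_le_of_lt {d mB mT NB NT j : ℕ} {lam : ℝ}
    (hB : DominatesBallExpansion d mB NB) (hT : DominatesBallExpansion d mT NT) (hlam₀ : 0 ≤ lam)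
    (hlam₁ : lam ≤ 1) (hle : mT ≤ mB) (hlt : mB < partialBallCard d (j + 1) lam)
    (hsum : partialBallCard d (j + 1) lam + partialBallCard d j lam ≤ mB + mT) :
    partialBallCard d (j + 2) lam + partialBallCard d (j + 1) lam ≤ NB + NT := by
  have hle' : (mT : ℝ) ≤ mB := by exact_mod_cast hle
  have hc₀nn : (0 : ℝ) ≤ d.choose j := Nat.cast_nonneg _
  have hc₁nn : (0 : ℝ) ≤ d.choose (j + 1) := Nat.cast_nonneg _
  have hb := partialBallCard_succ_zero d j
  have hb₂ := partialBallCard_succ_zero d (j + 1)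
  have hx := partialBallCard_eq_add d (j + 1) lam
  have hy := partialBallCard_eq_add d j lam
  have hc₀ : (d.choose j : ℝ) ≠ 0 := by
    intro h
    have h₁ : (d.choose (j + 1) : ℝ) = 0 := by
      exact_mod_cast Nat.choose_succ_eq_zero (by exact_mod_cast h)
    rw [h₁] at hx
    rw [h] at hy hb
    linarith
  -- `y` and `x` lie on the two linear pieces of the expansion function meeting at the breakpoint
  -- `partialBallCard d (j + 1) 0`.
  have hFy : partialBallCard d (j + 2) 0 + d.choose (j + 1) / d.choose j *
      (partialBallCard d j lam - partialBallCard d (j + 1) 0) = partialBallCard d (j + 1) lam := by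
    rw [hb₂, hx, hy, hb]
    field_simp
    ring
  have hFx : partialBallCard d (j + 2) 0 + d.choose (j + 2) / d.choose (j + 1) *
      (partialBallCard d (j + 1) lam - partialBallCard d (j + 1) 0) =
        partialBallCard d (j + 2) lam := by
    rw [partialBallCard_eq_add d (j + 2) lam, hx, add_sub_cancel_left]
    rcases eq_or_ne (d.choose (j + 1) : ℝ) 0 with h₁ | h₁
    · have h₂ : (d.choose (j + 2) : ℝ) = 0 := by
        exact_mod_cast Nat.choose_succ_eq_zero (by exact_mod_cast h₁)
      simp [h₂]
    · field_simp
  have hconcave := mul_add_mul_le_min_add_min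
    (x := partialBallCard d (j + 1) lam - partialBallCard d (j + 1) 0)
    (y := partialBallCard d j lam - partialBallCard d (j + 1) 0)
    (u := mB - partialBallCard d (j + 1) 0) (t := mT - partialBallCard d (j + 1) 0)
    (div_nonneg (Nat.cast_nonneg _) hc₁nn) (Nat.choose_add_two_div_choose_succ_le d j)
    (by rw [hy, hb]; nlinarith) (by rw [hx, add_sub_cancel_left]; positivity)
    (by linarith) (by linarith) (by linarith)
  have hy_ge : partialBallCard d j 0 ≤ partialBallCard d j lam := by rw [hy]; nlinarith
  have hx_le : partialBallCard d (j + 1) lam ≤ partialBallCard d (j + 2) 0 := by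
    rw [hx, hb₂]; nlinarith
  have hboundB := hB.add_min_le (j := j) (by linarith) (by linarith)
  have hboundT := hT.add_min_le (j := j) (by linarith) (by linarith)
  linarith

theorem DominatesBallExpansion.add {d mB mT NB NT : ℕ} (hle : mT ≤ mB)
    (hB : DominatesBallExpansion d mB NB) (hT : 0 < mT → DominatesBallExpansion d mT NT) :
    DominatesBallExpansion (d + 1) (mB + mT) (max NB mT + max NT mB) := by
  intro k lam h₀ h₁ hk
  push_cast at hk ⊢
  have := le_max_left (NB : ℝ) mT
  have := le_max_left (NT : ℝ) mB
  have := le_max_right (NT : ℝ) mB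
  rw [partialBallCard_succ_succ]
  rcases le_or_gt (partialBallCard d k lam) mB with hsmall | hsmall
  · linarith [hB k lam h₀ h₁ hsmall]
  obtain ⟨j, rfl⟩ : ∃ j, k = j + 1 := by
    refine Nat.exists_eq_add_one.2 (Nat.pos_of_ne_zero ?_)
    rintro rfl
    rw [partialBallCard_zero_right] at hsmall hk
    have hmB : mB = 0 := by exact_mod_cast Nat.lt_one_iff.mp (by exact_mod_cast hsmall.trans h₁)
    have hmT : mT = 0 := by omega
    subst hmB hmT
    norm_num at hsmall hk
    linarith
  rw [partialBallCard_succ_succ] at hk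
  have hmT : 0 < mT := by
    by_contra! h
    have : (mT : ℝ) = 0 := by exact_mod_cast Nat.le_zero.mp h
    linarith [partialBallCard_nonneg d j h₀]
  have hlarge : partialBallCard d (j + 1 + 1) lam + partialBallCard d (j + 1) lam ≤ NB + NT :=
    partialBallCard_add_le_of_lt hB (hT hmT) h₀ h₁.le hle hsmall hk
  linarith

theorem hammingDist_cons {β : Type*} [DecidableEq β] {n : ℕ} (a b : β) (x y : Fin n → β) :
    hammingDist (Fin.cons a x : Fin (n + 1) → β) (Fin.cons b y)
      = (if a = b then 0 else 1) + hammingDist x y := by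
  simp only [hammingDist, card_filter, Fin.sum_univ_succ, Fin.cons_zero, Fin.cons_succ]
  split_ifs <;> simp_all

section Cube

variable {β : Type*} [DecidableEq β] [Fintype β] {n : ℕ}

def hammingNbhd (r : ℕ) (A : Finset (Fin n → β)) : Finset (Fin n → β) :=
  {x | ∃ a ∈ A, hammingDist x a ≤ r}

theorem mem_hammingNbhd {r : ℕ} {A : Finset (Fin n → β)} {x : Fin n → β} :
    x ∈ hammingNbhd r A ↔ ∃ a ∈ A, hammingDist x a ≤ r := by
  simp [hammingNbhd]

theorem subset_hammingNbhd {r : ℕ} {A : Finset (Fin n → β)} : A ⊆ hammingNbhd r A :=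
  fun a ha => mem_hammingNbhd.2 ⟨a, ha, by simp⟩

theorem hammingNbhd_one_hammingNbhd_subset {r : ℕ} {A : Finset (Fin n → β)} :
    hammingNbhd 1 (hammingNbhd r A) ⊆ hammingNbhd (r + 1) A := by
  intro x hx
  obtain ⟨y, hy, hxy⟩ := mem_hammingNbhd.1 hx
  obtain ⟨a, ha, hya⟩ := mem_hammingNbhd.1 hy
  exact mem_hammingNbhd.2 ⟨a, ha, (hammingDist_triangle x y a).trans (by omega)⟩

def headSlice (b : β) (A : Finset (Fin (n + 1) → β)) : Finset (Fin n → β) :=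
  {y | (Fin.cons b y : Fin (n + 1) → β) ∈ A}

theorem mem_headSlice {b : β} {A : Finset (Fin (n + 1) → β)} {y : Fin n → β} :
    y ∈ headSlice b A ↔ (Fin.cons b y : Fin (n + 1) → β) ∈ A := by
  simp [headSlice]

theorem card_headSlice (b : β) (A : Finset (Fin (n + 1) → β)) :
    (headSlice b A).card = {x ∈ A | x 0 = b}.card := by
  refine card_nbij' (fun y => (Fin.cons b y : Fin (n + 1) → β)) Fin.tail (fun y hy => ?_)
    (fun x hx => ?_) (fun y _ => ?_) (fun x hx => ?_)
  · simpa using mem_headSlice.1 hy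
  · obtain ⟨hxA, rfl⟩ := mem_filter.1 hx
    simpa [mem_headSlice] using hxA
  · simp
  · obtain ⟨-, rfl⟩ := mem_filter.1 hx
    simp

theorem card_eq_sum_card_headSlice (A : Finset (Fin (n + 1) → β)) :
    A.card = ∑ b, (headSlice b A).card := by
  simp_rw [card_headSlice]
  exact card_eq_sum_card_fiberwise fun x _ => mem_univ (x 0)

theorem headSlice_hammingNbhd_subset (b : β) (A : Finset (Fin (n + 1) → β)) :
    hammingNbhd 1 (headSlice b A) ⊆ headSlice b (hammingNbhd 1 A) := by
  intro y hy
  obtain ⟨z, hz, hyz⟩ := mem_hammingNbhd.1 hy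
  exact mem_headSlice.2 (mem_hammingNbhd.2 ⟨_, mem_headSlice.1 hz, by simpa [hammingDist_cons]⟩)

theorem headSlice_subset_headSlice_hammingNbhd (b c : β) (A : Finset (Fin (n + 1) → β)) :
    headSlice c A ⊆ headSlice b (hammingNbhd 1 A) := by
  intro y hy
  refine mem_headSlice.2 (mem_hammingNbhd.2 ⟨_, mem_headSlice.1 hy, ?_⟩)
  rw [hammingDist_cons]
  split_ifs <;> simp

theorem max_card_le_card_headSlice_hammingNbhd (b c : β) (A : Finset (Fin (n + 1) → β)) :
    max (hammingNbhd 1 (headSlice b A)).card (headSlice c A).card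
      ≤ (headSlice b (hammingNbhd 1 A)).card :=
  max_le (card_le_card (headSlice_hammingNbhd_subset b A))
    (card_le_card (headSlice_subset_headSlice_hammingNbhd b c A))

end Cube

theorem card_eq_card_headSlice_add {n : ℕ} (A : Finset (Fin (n + 1) → Bool)) (b : Bool) :
    A.card = (headSlice b A).card + (headSlice (!b) A).card := by
  rw [card_eq_sum_card_headSlice, Fintype.sum_bool]
  cases b <;> simp [add_comm]

theorem dominatesBallExpansion_card_hammingNbhd {n : ℕ} {A : Finset (Fin n → Bool)}
    (hA : A.Nonempty) : DominatesBallExpansion n A.card (hammingNbhd 1 A).card := by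
  induction n with
  | zero =>
    intro k lam _ _ _
    rw [partialBallCard_zero_succ]
    exact_mod_cast (hA.mono subset_hammingNbhd).card_pos
  | succ d ih =>
    obtain ⟨b, hb⟩ : ∃ b : Bool, (headSlice (!b) A).card ≤ (headSlice b A).card := by
      rcases le_total (headSlice true A).card (headSlice false A).card with h | h
      exacts [⟨false, h⟩, ⟨true, h⟩]
    have hpos : 0 < (headSlice b A).card := by
      have := card_eq_card_headSlice_add A b
      have := hA.card_pos
      omega
    have := (ih (card_pos.1 hpos)).add hb fun h => ih (card_pos.1 h)
    rw [← card_eq_card_headSlice_add] at this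
    refine this.mono ?_
    rw [card_eq_card_headSlice_add (hammingNbhd 1 A) b]
    exact add_le_add (max_card_le_card_headSlice_hammingNbhd b (!b) A)
      (max_card_le_card_headSlice_hammingNbhd (!b) b A)

theorem partialBallCard_add_le_card_hammingNbhd {n k : ℕ} {lam : ℝ} {A : Finset (Fin n → Bool)}
    (hA : A.Nonempty) (h₀ : 0 ≤ lam) (h₁ : lam < 1) (hk : partialBallCard n k lam ≤ A.card) :
    ∀ r, partialBallCard n (k + r) lam ≤ (hammingNbhd r A).card
  | 0 => hk.trans (by exact_mod_cast card_le_card subset_hammingNbhd)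
  | r + 1 =>
    (dominatesBallExpansion_card_hammingNbhd (hA.mono subset_hammingNbhd) (k + r) lam h₀ h₁
      (partialBallCard_add_le_card_hammingNbhd hA h₀ h₁ hk r)).trans
      (by exact_mod_cast card_le_card hammingNbhd_one_hammingNbhd_subset)

theorem expansion_ge_BSize_general (n k : ℕ) (lam : ℝ)
    (hlam0 : 0 ≤ lam) (hlam1 : lam < 1)
    (A : Finset (Fin n → Bool)) (hA : A.Nonempty)
    (hvol : (A.card : ℝ) / 2 ^ n = BSize n k lam) :
    ∀ r : ℕ,
      BSize n (k + r) lam ≤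
        (Nat.card {x : Fin n → Bool // ∃ a ∈ A, hammingDist x a ≤ r} : ℝ) / 2 ^ n := by
  intro r
  have hBSize : ∀ k, BSize n k lam = partialBallCard n k lam / 2 ^ n := fun k => by
    rw [BSize, partialBallCard, inv_mul_eq_div]
  have hcard : Nat.card {x : Fin n → Bool // ∃ a ∈ A, hammingDist x a ≤ r}
      = (hammingNbhd r A).card := by
    rw [Nat.card_eq_fintype_card, Fintype.card_subtype, hammingNbhd]
  rw [hBSize, hcard]
  rw [hBSize, div_left_inj' (by positivity)] at hvol
  gcongr
  exact partialBallCard_add_le_card_hammingNbhd hA hlam0 hlam1 hvol.ge r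

/-- Expansion lower bound for any set in the hypercube (Harper/Nigmatullin). -/
theorem expansion_ge_BSize (n k : ℕ) (lam : ℝ) (hk : k ≤ n)
    (hlam0 : 0 ≤ lam) (hlam1 : lam < 1)
    (A : Finset (Fin n → Bool)) (hA : A.Nonempty)
    (hvol : (A.card : ℝ) / 2 ^ n = BSize n k lam) :
    ∀ r : ℕ,
      BSize n (k + r) lam ≤
        (Nat.card {x : Fin n → Bool // ∃ a ∈ A, hammingDist x a ≤ r} : ℝ) / 2 ^ n :=
  expansion_ge_BSize_general n k lam hlam0 hlam1 A hA hvol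
end

section
/- Let A ⊆ {0,1}^n be a nonempty set with uniform measure vol(A) = μ ∈ (0, 1/2]. Then the expected Hamming distance from a uniformly random x ∈ {0,1}^n to A is at most √(−n·ln(μ)/2) + μ·√(n/2). -/
open Finset Real

/-- Two-point Hoeffding bound. -/
lemma two_point (u v l : ℝ) (h : |u - v| ≤ 1) :
    Real.exp (l * u) + Real.exp (l * v) ≤ 2 * Real.exp (l * ((u + v) / 2) + l ^ 2 / 8) := by
  have key : Real.exp (l * u) + Real.exp (l * v)
      = 2 * Real.exp (l * ((u + v) / 2)) * Real.cosh (l * ((u - v) / 2)) := by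
    rw [Real.cosh_eq, Real.exp_neg,
      show l * u = l * ((u + v) / 2) + l * ((u - v) / 2) by ring,
      show l * v = l * ((u + v) / 2) - l * ((u - v) / 2) by ring,
      Real.exp_add, Real.exp_sub]
    field_simp [Real.exp_ne_zero]
  rw [key]
  have h1 : Real.cosh (l * ((u - v) / 2)) ≤ Real.exp ((l * ((u - v) / 2)) ^ 2 / 2) :=
    Real.cosh_le_exp_half_sq _
  have h2 : (l * ((u - v) / 2)) ^ 2 / 2 ≤ l ^ 2 / 8 := by
    have : (u - v) ^ 2 ≤ 1 := by
      have := sq_abs (u - v)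
      nlinarith [abs_nonneg (u - v)]
    nlinarith [sq_nonneg l, sq_nonneg (u - v), sq_nonneg (l * (u - v))]
  calc 2 * Real.exp (l * ((u + v) / 2)) * Real.cosh (l * ((u - v) / 2))
      ≤ 2 * Real.exp (l * ((u + v) / 2)) * Real.exp (l ^ 2 / 8) := by
        refine mul_le_mul_of_nonneg_left ?_ (by positivity)
        exact h1.trans (Real.exp_le_exp.2 h2)
    _ = 2 * Real.exp (l * ((u + v) / 2) + l ^ 2 / 8) := by
        rw [mul_assoc, ← Real.exp_add]

/-- Combining exponentials in the induction step. -/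
lemma combine_exp (n : ℕ) (l S : ℝ) :
    2 * Real.exp (l ^ 2 / 8) * (2 ^ n * Real.exp (l * (S / 2 ^ n) + l ^ 2 * n / 8))
      = 2 ^ (n + 1) * Real.exp (l * (2 * S / 2 ^ (n + 1)) + l ^ 2 * ((n + 1 : ℕ) : ℝ) / 8) := by
  have h2n : (2 : ℝ) ^ n ≠ 0 := by positivity
  have hexp_eq : l ^ 2 / 8 + (l * (S / 2 ^ n) + l ^ 2 * n / 8)
      = l * (2 * S / 2 ^ (n + 1)) + l ^ 2 * ((n + 1 : ℕ) : ℝ) / 8 := by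
    push_cast
    rw [pow_succ]
    field_simp
    ring
  rw [← hexp_eq]
  conv_rhs => rw [Real.exp_add]
  rw [pow_succ]
  ring

/-- MGF bound for coordinate-Lipschitz functions on the Boolean cube. -/
lemma mgf_bound : ∀ (n : ℕ) (f : (Fin n → Bool) → ℝ),
    (∀ x (i : Fin n) b, f x - f (Function.update x i b) ≤ 1) → ∀ l : ℝ,
    ∑ x : Fin n → Bool, Real.exp (l * f x)
      ≤ 2 ^ n * Real.exp (l * ((∑ x : Fin n → Bool, f x) / 2 ^ n) + l ^ 2 * n / 8) := by
  intro n
  induction n with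
  | zero =>
    intro f _ l
    have h1 : ∑ x : Fin 0 → Bool, Real.exp (l * f x) = Real.exp (l * f (fun i => i.elim0)) :=
      Fintype.sum_subsingleton _ _
    have h2 : ∑ x : Fin 0 → Bool, f x = f (fun i => i.elim0) :=
      Fintype.sum_subsingleton _ _
    rw [h1, h2]
    norm_num
  | succ n ih =>
    intro f hf l
    set e := Fin.consEquiv (fun _ : Fin (n + 1) => Bool)
    have hsum : ∀ F : (Fin (n + 1) → Bool) → ℝ, ∑ x, F x
        = ∑ y : Fin n → Bool, (F (Fin.cons true y) + F (Fin.cons false y)) := by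
      intro F
      rw [← Equiv.sum_comp e F, Fintype.sum_prod_type_right]
      exact Finset.sum_congr rfl fun y _ => by simp [e, Fin.consEquiv]
    set g : (Fin n → Bool) → ℝ := fun y => (f (Fin.cons true y) + f (Fin.cons false y)) / 2
      with hg
    have hgl : ∀ y (i : Fin n) b, g y - g (Function.update y i b) ≤ 1 := by
      intro y i b
      have h1 := hf (Fin.cons true y) i.succ b
      have h2 := hf (Fin.cons false y) i.succ b
      rw [← Fin.cons_update] at h1 h2
      simp only [hg]
      linarith
    have hstep : ∀ y : Fin n → Bool,
        Real.exp (l * f (Fin.cons true y)) + Real.exp (l * f (Fin.cons false y))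
          ≤ 2 * Real.exp (l * g y + l ^ 2 / 8) := by
      intro y
      have habs : |f (Fin.cons true y) - f (Fin.cons false y)| ≤ 1 := by
        rw [abs_le]
        have h1 := hf (Fin.cons true y) 0 false
        have h2 := hf (Fin.cons false y) 0 true
        rw [Fin.update_cons_zero] at h1 h2
        constructor <;> linarith
      have := two_point (f (Fin.cons true y)) (f (Fin.cons false y)) l habs
      simpa [hg] using this
    have hmean : ∑ x : Fin (n + 1) → Bool, f x = 2 * ∑ y : Fin n → Bool, g y := by
      rw [hsum f, Finset.mul_sum]
      exact Finset.sum_congr rfl fun y _ => by simp only [hg]; ring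
    calc ∑ x : Fin (n + 1) → Bool, Real.exp (l * f x)
        = ∑ y : Fin n → Bool,
            (Real.exp (l * f (Fin.cons true y)) + Real.exp (l * f (Fin.cons false y))) :=
          hsum _
      _ ≤ ∑ y : Fin n → Bool, 2 * Real.exp (l * g y + l ^ 2 / 8) :=
          Finset.sum_le_sum fun y _ => hstep y
      _ = 2 * Real.exp (l ^ 2 / 8) * ∑ y : Fin n → Bool, Real.exp (l * g y) := by
          rw [Finset.mul_sum]
          exact Finset.sum_congr rfl fun y _ => by rw [Real.exp_add]; ring
      _ ≤ 2 * Real.exp (l ^ 2 / 8) *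
            (2 ^ n * Real.exp (l * ((∑ y : Fin n → Bool, g y) / 2 ^ n) + l ^ 2 * n / 8)) := by
          refine mul_le_mul_of_nonneg_left (ih g hgl l) (by positivity)
      _ = 2 ^ (n + 1) *
            Real.exp (l * ((∑ x : Fin (n + 1) → Bool, f x) / 2 ^ (n + 1))
              + l ^ 2 * ((n + 1 : ℕ) : ℝ) / 8) := by
          rw [hmean, ← combine_exp n l (∑ y : Fin n → Bool, g y)]

/-- Robustness upper bound: the expected Hamming distance from a uniform point of
`{0,1}^n` to a set of measure `μ ∈ (0, 1/2]` is at most `√(−n·ln μ/2) + μ·√(n/2)`. -/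
theorem expected_distance_upper (n : ℕ) (A : Finset (Fin n → Bool)) (hA : A.Nonempty)
    (μ : ℝ) (hvol : (A.card : ℝ) / 2 ^ n = μ) (hμ0 : 0 < μ) (hμ1 : μ ≤ 1 / 2) :
    (∑ x : Fin n → Bool,
        ((sInf {d : ℕ | ∃ a ∈ A, hammingDist x a = d} : ℕ) : ℝ)) / 2 ^ n
      ≤ Real.sqrt (-(n : ℝ) * Real.log μ / 2) + μ * Real.sqrt ((n : ℝ) / 2) := by
  classical
  -- n = 0 is impossible since then μ ≥ 1
  rcases Nat.eq_zero_or_pos n with hn0 | hn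
  · subst hn0
    have h1 : (1 : ℝ) ≤ A.card := by exact_mod_cast Finset.card_pos.2 hA
    rw [pow_zero, div_one] at hvol
    linarith
  set D : (Fin n → Bool) → ℕ := fun x => sInf {d : ℕ | ∃ a ∈ A, hammingDist x a = d} with hD
  have hne : ∀ x, {d : ℕ | ∃ a ∈ A, hammingDist x a = d}.Nonempty := by
    intro x
    obtain ⟨a, ha⟩ := hA
    exact ⟨hammingDist x a, a, ha, rfl⟩
  have hDle : ∀ x a, a ∈ A → D x ≤ hammingDist x a := fun x a ha =>
    Nat.sInf_le ⟨a, ha, rfl⟩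
  have hDmem : ∀ x, ∃ a ∈ A, hammingDist x a = D x := fun x => Nat.sInf_mem (hne x)
  have hDzero : ∀ x ∈ A, D x = 0 := fun x hx =>
    Nat.le_zero.1 (by simpa using hDle x x hx)
  set f : (Fin n → Bool) → ℝ := fun x => (D x : ℝ) with hff
  have hlip1 : ∀ x z : Fin n → Bool, (D x : ℝ) ≤ D z + hammingDist x z := by
    intro x z
    obtain ⟨a, ha, hda⟩ := hDmem z
    have : D x ≤ hammingDist x z + hammingDist z a :=
      (hDle x a ha).trans (hammingDist_triangle x z a)
    rw [hda] at this
    exact_mod_cast by omega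
  have hlip : ∀ x (i : Fin n) b, f x - f (Function.update x i b) ≤ 1 := by
    intro x i b
    have hd : hammingDist x (Function.update x i b) ≤ 1 := by
      unfold hammingDist
      refine le_trans (Finset.card_le_card (fun j hj => ?_))
        (le_of_eq (Finset.card_singleton i))
      simp only [Finset.mem_filter, Finset.mem_univ, true_and] at hj
      simp only [Finset.mem_singleton]
      by_contra hji
      exact hj (Function.update_of_ne hji b x).symm
    have := hlip1 x (Function.update x i b)
    simp only [hff]
    have : (D x : ℝ) ≤ D (Function.update x i b) + 1 := by
      refine this.trans ?_
      have : (hammingDist x (Function.update x i b) : ℝ) ≤ 1 := by exact_mod_cast hd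
      linarith
    linarith
  set M : ℝ := (∑ x : Fin n → Bool, f x) / 2 ^ n with hM
  have hMnonneg : 0 ≤ M := by
    apply div_nonneg _ (by positivity)
    exact Finset.sum_nonneg fun x _ => by positivity
  set l : ℝ := -(4 * M / n) with hl
  have hmgf := mgf_bound n f hlip l
  -- lower bound the sum of exponentials by |A|
  have hlb : (A.card : ℝ) ≤ ∑ x : Fin n → Bool, Real.exp (l * f x) := by
    have h1 : (A.card : ℝ) = ∑ x ∈ A, Real.exp (l * f x) := by
      rw [show ∑ x ∈ A, Real.exp (l * f x) = ∑ _x ∈ A, (1 : ℝ) from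
        Finset.sum_congr rfl fun x hx => by simp [hff, hDzero x hx]]
      simp
    rw [h1]
    exact Finset.sum_le_sum_of_subset_of_nonneg (Finset.subset_univ A)
      (fun x _ _ => (Real.exp_pos _).le)
  have hμcard : μ * 2 ^ n = (A.card : ℝ) := by
    field_simp at hvol ⊢; linarith
  have hexp : μ ≤ Real.exp (l * M + l ^ 2 * n / 8) := by
    have h2 : μ * 2 ^ n ≤ 2 ^ n * Real.exp (l * M + l ^ 2 * n / 8) := by
      rw [hμcard]; exact hlb.trans hmgf
    have h2n : (0 : ℝ) < 2 ^ n := by positivity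
    nlinarith
  have hlog : Real.log μ ≤ l * M + l ^ 2 * n / 8 := (Real.log_le_iff_le_exp hμ0).2 hexp
  have hnpos : (0 : ℝ) < n := by exact_mod_cast hn
  have hval : l * M + l ^ 2 * n / 8 = -2 * M ^ 2 / n := by
    rw [hl]; field_simp; ring
  rw [hval] at hlog
  have hM2 : M ^ 2 ≤ -(n : ℝ) * Real.log μ / 2 := by
    rw [le_div_iff₀ hnpos] at hlog
    nlinarith
  have hMle : M ≤ Real.sqrt (-(n : ℝ) * Real.log μ / 2) :=
    Real.le_sqrt_of_sq_le hM2
  have hrest : 0 ≤ μ * Real.sqrt ((n : ℝ) / 2) := by positivity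
  calc (∑ x : Fin n → Bool,
        ((sInf {d : ℕ | ∃ a ∈ A, hammingDist x a = d} : ℕ) : ℝ)) / 2 ^ n = M := rfl
    _ ≤ Real.sqrt (-(n : ℝ) * Real.log μ / 2) + μ * Real.sqrt ((n : ℝ) / 2) := by linarith
end
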